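/- arXiv:2207.06246 — 5 statements merged into one kernel-verified Lean document; each statement's English description precedes it below -/
import Mathlib

section
/- Let 𝔡, K ∈ ℕ, let 𝒢 : ℝ^𝔡 → ℝ^𝔡 be measurable, for every k ∈ {1,…,K} let ψ_k : ℝ^𝔡 → ℝ be continuously differentiable, assume for all k, l ∈ {1,…,K} with k ≠ l and all θ ∈ ℝ^𝔡 with min_{m∈{1,…,K}} ‖(∇ψ_m)(θ)‖ > 0 that ⟨(∇ψ_k)(θ), (∇ψ_l)(θ)⟩ = 0, let τ ∈ (0,∞], and let Θ ∈ C([0,τ), ℝ^𝔡) satisfy for all t ∈ [0,τ) that inf_{s∈[0,t]} min_{k∈{1,…,K}} ‖(∇ψ_k)(Θ_s)‖ > 0, that ∫₀ᵗ ‖𝒢(Θ_s)‖ ds < ∞, and that Θ_t = Θ_0 + ∫₀ᵗ ( 𝒢(Θ_s) − Σ_{k=1}^K ‖(∇ψ_k)(Θ_s)‖⁻² ⟨𝒢(Θ_s), (∇ψ_k)(Θ_s)⟩ (∇ψ_k)(Θ_s) ) ds. Then for all k ∈ {1,…,K} and all t ∈ [0,τ) it holds that ψ_k(Θ_t) = ψ_k(Θ_0).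 -/
/-! Along the flow, `ψ k ∘ Θ` is absolutely continuous on `[0, t]`: `Θ` is the primitive of an
integrable field and `ψ k` is Lipschitz on the compact image `Θ '' [0, t]`. Almost everywhere its
derivative is `⟪∇ψ k (Θ s), Θ' s⟫`, which vanishes because the field driving `Θ` has had its
components along the mutually orthogonal gradients removed. An absolutely continuous function
whose derivative vanishes almost everywhere is constant. -/

open MeasureTheory Set Filter InnerProductSpace
open scoped RealInnerProductSpace ENNReal NNReal

theorem AbsolutelyContinuousOnInterval.of_dist_le_mul {X Y : Type*} [PseudoMetricSpace X]
    [PseudoMetricSpace Y] {f : ℝ → X} {g : ℝ → Y} {a b : ℝ} (K : ℝ)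
    (hg : AbsolutelyContinuousOnInterval g a b)
    (hfg : ∀ x ∈ uIcc a b, ∀ y ∈ uIcc a b, dist (f x) (f y) ≤ K * dist (g x) (g y)) :
    AbsolutelyContinuousOnInterval f a b := by
  unfold AbsolutelyContinuousOnInterval at hg ⊢
  have hKg := hg.const_mul K
  rw [mul_zero] at hKg
  refine squeeze_zero' (.of_forall fun _ ↦ Finset.sum_nonneg fun _ _ ↦ dist_nonneg) ?_ hKg
  filter_upwards [eventually_inf_principal.mpr (.of_forall fun _ h ↦ h)] with E hE
  rw [Finset.mul_sum]
  exact Finset.sum_le_sum fun i hi ↦ hfg _ (hE.1 i hi).1 _ (hE.1 i hi).2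

theorem LipschitzOnWith.comp_absolutelyContinuousOnInterval {X Y : Type*} [PseudoMetricSpace X]
    [PseudoMetricSpace Y] {f : X → Y} {g : ℝ → X} {s : Set X} {a b : ℝ} {K : ℝ≥0}
    (hf : LipschitzOnWith K f s) (hg : AbsolutelyContinuousOnInterval g a b)
    (hgs : MapsTo g (uIcc a b) s) : AbsolutelyContinuousOnInterval (f ∘ g) a b :=
  hg.of_dist_le_mul K fun _ hx _ hy ↦ hf.dist_le_mul _ (hgs hx) _ (hgs hy)

theorem IntervalIntegrable.absolutelyContinuousOnInterval_intervalIntegral_of_normed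
    {F : Type*} [NormedAddCommGroup F] [NormedSpace ℝ F] {f : ℝ → F} {a b c : ℝ}
    (hf : IntervalIntegrable f volume a b) (hc : c ∈ uIcc a b) :
    AbsolutelyContinuousOnInterval (fun x ↦ ∫ r in c..x, f r) a b := by
  refine (hf.norm.absolutelyContinuousOnInterval_intervalIntegral hc).of_dist_le_mul 1
    fun x hx y hy ↦ ?_
  have hsub : ∀ z ∈ uIcc a b, uIcc c z ⊆ uIcc a b := fun z hz ↦ uIcc_subset_uIcc hc hz
  rw [one_mul, dist_eq_norm, dist_eq_norm,
    intervalIntegral.integral_interval_sub_left (hf.mono_set (hsub x hx)) (hf.mono_set (hsub y hy)),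
    intervalIntegral.integral_interval_sub_left (hf.norm.mono_set (hsub x hx))
      (hf.norm.mono_set (hsub y hy)), Real.norm_eq_abs]
  exact intervalIntegral.norm_integral_le_abs_integral_norm

variable {E : Type*} [NormedAddCommGroup E] [InnerProductSpace ℝ E]

theorem ContDiff.continuous_gradient [CompleteSpace E] {f : E → ℝ} (hf : ContDiff ℝ 1 f) :
    Continuous (gradient f) :=
  (toDual ℝ E).symm.continuous.comp (hf.continuous_fderiv one_ne_zero)

theorem ContDiff.apply_add_intervalIntegral_eq_of_inner_gradient_eq_zero [CompleteSpace E]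
    {f : E → ℝ} (hf : ContDiff ℝ 1 f) {v : ℝ → E} {a b : ℝ}
    (hv : IntervalIntegrable v volume a b) (x₀ : E)
    (horth : ∀ s ∈ uIcc a b, ⟪gradient f (x₀ + ∫ r in a..s, v r), v s⟫ = 0) :
    ∀ s ∈ uIcc a b, f (x₀ + ∫ r in a..s, v r) = f x₀ := by
  set γ : ℝ → E := fun s ↦ x₀ + ∫ r in a..s, v r with hγ_def
  have hγ : AbsolutelyContinuousOnInterval γ a b :=
    (hv.absolutelyContinuousOnInterval_intervalIntegral_of_normed left_mem_uIcc).of_dist_le_mul 1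
      fun x _ y _ ↦ by rw [one_mul, hγ_def, dist_add_left]
  obtain ⟨K, hK⟩ := hf.locallyLipschitz.locallyLipschitzOn.exists_lipschitzOnWith_of_compact
    (isCompact_uIcc.image_of_continuousOn hγ.continuousOn)
  have hderiv : ∀ᵐ x, x ∈ uIcc a b → HasDerivAt (f ∘ γ) 0 x := by
    filter_upwards [hv.ae_hasDerivAt_integral] with x hx hxab
    have hcomp := (hf.differentiable one_ne_zero (γ x)).hasGradientAt.hasFDerivAt.comp_hasDerivAt x
      ((hx hxab a left_mem_uIcc).const_add x₀)
    rwa [toDual_apply_apply, horth x hxab] at hcomp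
  obtain ⟨C, hC⟩ := (hK.comp_absolutelyContinuousOnInterval hγ (mapsTo_image _ _)
    ).const_of_ae_hasDerivAt_zero hderiv
  intro s hs
  have h₀ := hC a left_mem_uIcc
  simp only [Function.comp_apply, hγ_def, intervalIntegral.integral_same, add_zero] at h₀
  rw [h₀]
  exact hC s hs

/-- For an orthogonal family `u`, this is the orthogonal projection of `x` onto the orthogonal
complement of the span of `u`. -/
noncomputable def removeComponents {ι : Type*} [Fintype ι] (u : ι → E) (x : E) : E :=
  x - ∑ l, ((‖u l‖ ^ 2)⁻¹ * ⟪x, u l⟫) • u l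

theorem norm_inv_norm_sq_mul_inner_smul_le (x u : E) : ‖((‖u‖ ^ 2)⁻¹ * ⟪x, u⟫) • u‖ ≤ ‖x‖ := by
  rcases eq_or_ne u 0 with rfl | hu
  · simp
  have hu' : 0 < ‖u‖ := norm_pos_iff.mpr hu
  rw [norm_smul, norm_mul, norm_inv, norm_pow, norm_norm, Real.norm_eq_abs]
  calc (‖u‖ ^ 2)⁻¹ * |⟪x, u⟫| * ‖u‖ ≤ (‖u‖ ^ 2)⁻¹ * (‖x‖ * ‖u‖) * ‖u‖ := by
        gcongr; exact abs_real_inner_le_norm x u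
    _ = ‖x‖ := by field_simp

theorem norm_removeComponents_le {ι : Type*} [Fintype ι] (u : ι → E) (x : E) :
    ‖removeComponents u x‖ ≤ (1 + Fintype.card ι) * ‖x‖ := by
  calc ‖removeComponents u x‖ ≤ ‖x‖ + ∑ l, ‖((‖u l‖ ^ 2)⁻¹ * ⟪x, u l⟫) • u l‖ :=
        (norm_sub_le _ _).trans (add_le_add_right (norm_sum_le _ _) _)
    _ ≤ ‖x‖ + ∑ _l : ι, ‖x‖ := by gcongr; exact norm_inv_norm_sq_mul_inner_smul_le _ _
    _ = (1 + Fintype.card ι) * ‖x‖ := by simp [Finset.card_univ]; ring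

theorem inner_removeComponents_eq_zero {ι : Type*} [Fintype ι] [DecidableEq ι] {u : ι → E} {k : ι}
    (hk : u k ≠ 0) (horth : ∀ l, l ≠ k → ⟪u k, u l⟫ = 0) (x : E) :
    ⟪u k, removeComponents u x⟫ = 0 := by
  rw [removeComponents, inner_sub_right, inner_sum, Finset.sum_eq_single k
    (fun l _ hlk ↦ by rw [real_inner_smul_right, horth l hlk, mul_zero]) (by simp),
    real_inner_smul_right, real_inner_self_eq_norm_sq, real_inner_comm]
  field_simp [norm_ne_zero_iff.mpr hk]
  ring

theorem stmt0_general
    (𝔡 K : ℕ)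
    (𝒢 : EuclideanSpace ℝ (Fin 𝔡) → EuclideanSpace ℝ (Fin 𝔡))
    (h𝒢meas : Measurable 𝒢)
    (ψ : Fin K → EuclideanSpace ℝ (Fin 𝔡) → ℝ)
    (hψ : ∀ k, ContDiff ℝ 1 (ψ k))
    (horth : ∀ k l : Fin K, k ≠ l → ∀ θ : EuclideanSpace ℝ (Fin 𝔡),
      (∀ m : Fin K, 0 < ‖gradient (ψ m) θ‖) →
      ⟪gradient (ψ k) θ, gradient (ψ l) θ⟫ = 0)
    (τ : ℝ≥0∞)
    (Θ : ℝ → EuclideanSpace ℝ (Fin 𝔡))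
    (hΘcont : ContinuousOn Θ {t : ℝ | 0 ≤ t ∧ ENNReal.ofReal t < τ})
    (hpos : ∀ t : ℝ, 0 ≤ t → ENNReal.ofReal t < τ →
      ∃ c > 0, ∀ s ∈ Set.Icc (0 : ℝ) t, ∀ k : Fin K, c ≤ ‖gradient (ψ k) (Θ s)‖)
    (hint : ∀ t : ℝ, 0 ≤ t → ENNReal.ofReal t < τ →
      IntegrableOn (fun s => ‖𝒢 (Θ s)‖) (Set.Icc (0 : ℝ) t))
    (hflow : ∀ t : ℝ, 0 ≤ t → ENNReal.ofReal t < τ →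
      Θ t = Θ 0 + ∫ s in (0:ℝ)..t,
        (𝒢 (Θ s) - ∑ k : Fin K,
          ((‖gradient (ψ k) (Θ s)‖ ^ 2)⁻¹ * ⟪𝒢 (Θ s), gradient (ψ k) (Θ s)⟫) •
            gradient (ψ k) (Θ s))) :
    ∀ k : Fin K, ∀ t : ℝ, 0 ≤ t → ENNReal.ofReal t < τ →
      ψ k (Θ t) = ψ k (Θ 0) := by
  intro k t ht htτ
  set v : ℝ → EuclideanSpace ℝ (Fin 𝔡) :=
    fun s ↦ removeComponents (fun l ↦ gradient (ψ l) (Θ s)) (𝒢 (Θ s))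
  have hIcc : Icc 0 t ⊆ {s : ℝ | 0 ≤ s ∧ ENNReal.ofReal s < τ} := fun s hs ↦
    ⟨hs.1, (ENNReal.ofReal_le_ofReal hs.2).trans_lt htτ⟩
  have hv : IntegrableOn v (Icc 0 t) := by
    have hΘm : AEMeasurable Θ (volume.restrict (Icc 0 t)) :=
      (hΘcont.mono hIcc).aemeasurable measurableSet_Icc
    have hvm : AEMeasurable v (volume.restrict (Icc 0 t)) := by
      have := fun l ↦ (hψ l).continuous_gradient.measurable
      simp only [v, removeComponents]
      fun_prop
    refine ((hint t ht htτ).const_mul (1 + K)).mono' hvm.aestronglyMeasurable (.of_forall ?_)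
    simpa using fun s ↦ norm_removeComponents_le (fun l ↦ gradient (ψ l) (Θ s)) (𝒢 (Θ s))
  rw [← uIcc_of_le ht] at hIcc hv
  have hΘ : ∀ s ∈ uIcc 0 t, Θ s = Θ 0 + ∫ r in 0..s, v r :=
    fun s hs ↦ hflow s (hIcc hs).1 (hIcc hs).2
  have horthv : ∀ s ∈ uIcc 0 t, ⟪gradient (ψ k) (Θ s), v s⟫ = 0 := fun s hs ↦ by
    obtain ⟨c, hc, hcle⟩ := hpos s (hIcc hs).1 (hIcc hs).2
    have hgrad : ∀ m, 0 < ‖gradient (ψ m) (Θ s)‖ :=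
      fun m ↦ hc.trans_le (hcle s ⟨(hIcc hs).1, le_rfl⟩ m)
    exact inner_removeComponents_eq_zero (u := fun l ↦ gradient (ψ l) (Θ s))
      (norm_pos_iff.mp (hgrad k)) (fun l hlk ↦ horth k l hlk.symm _ hgrad) _
  have hψΘ := (hψ k).apply_add_intervalIntegral_eq_of_inner_gradient_eq_zero
    hv.intervalIntegrable (Θ 0) fun s hs ↦ by rw [← hΘ s hs]; exact horthv s hs
  rw [hΘ t right_mem_uIcc]
  exact hψΘ t right_mem_uIcc

/-- Lemma 2.1 (Gradient flow dynamics on submanifolds): if the gradient flow is projected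
onto the orthogonal complement of the gradients of the functions `ψ k`, then the quantities
`ψ k (Θ t)` are conserved along the trajectory. -/
theorem stmt0
    (𝔡 K : ℕ)
    (𝒢 : EuclideanSpace ℝ (Fin 𝔡) → EuclideanSpace ℝ (Fin 𝔡))
    (h𝒢meas : Measurable 𝒢)
    (ψ : Fin K → EuclideanSpace ℝ (Fin 𝔡) → ℝ)
    (hψ : ∀ k, ContDiff ℝ 1 (ψ k))
    (horth : ∀ k l : Fin K, k ≠ l → ∀ θ : EuclideanSpace ℝ (Fin 𝔡),
      (∀ m : Fin K, 0 < ‖gradient (ψ m) θ‖) →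
      ⟪gradient (ψ k) θ, gradient (ψ l) θ⟫ = 0)
    (τ : ℝ≥0∞) (hτ : 0 < τ)
    (Θ : ℝ → EuclideanSpace ℝ (Fin 𝔡))
    (hΘcont : ContinuousOn Θ {t : ℝ | 0 ≤ t ∧ ENNReal.ofReal t < τ})
    (hpos : ∀ t : ℝ, 0 ≤ t → ENNReal.ofReal t < τ →
      ∃ c > 0, ∀ s ∈ Set.Icc (0 : ℝ) t, ∀ k : Fin K, c ≤ ‖gradient (ψ k) (Θ s)‖)
    (hint : ∀ t : ℝ, 0 ≤ t → ENNReal.ofReal t < τ →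
      IntegrableOn (fun s => ‖𝒢 (Θ s)‖) (Set.Icc (0 : ℝ) t))
    (hflow : ∀ t : ℝ, 0 ≤ t → ENNReal.ofReal t < τ →
      Θ t = Θ 0 + ∫ s in (0:ℝ)..t,
        (𝒢 (Θ s) - ∑ k : Fin K,
          ((‖gradient (ψ k) (Θ s)‖ ^ 2)⁻¹ * ⟪𝒢 (Θ s), gradient (ψ k) (Θ s)⟫) •
            gradient (ψ k) (Θ s))) :
    ∀ k : Fin K, ∀ t : ℝ, 0 ≤ t → ENNReal.ofReal t < τ →
      ψ k (Θ t) = ψ k (Θ 0) :=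
  stmt0_general 𝔡 K 𝒢 h𝒢meas ψ hψ horth τ Θ hΘcont hpos hint hflow
end

section
/- Let 𝔡, K ∈ ℕ, for every k ∈ {1,…,K} let ψ_k : ℝ^𝔡 → ℝ be continuously differentiable, let U = {θ ∈ ℝ^𝔡 : min_{k∈{1,…,K}} ‖(∇ψ_k)(θ)‖ > 0}, let 𝓛 ∈ C¹(U,ℝ), assume for all θ ∈ U and all k, l ∈ {1,…,K} with k ≠ l that ⟨(∇ψ_k)(θ), (∇ψ_l)(θ)⟩ = 0, and let γ ∈ C([0,∞),[0,∞)) and Θ ∈ C([0,∞),U) satisfy for all t ∈ [0,∞) that Θ_t = Θ_0 − ∫₀ᵗ γ(s) ( (∇𝓛)(Θ_s) − Σ_{k=1}^K ‖(∇ψ_k)(Θ_s)‖⁻² ⟨(∇𝓛)(Θ_s), (∇ψ_k)(Θ_s)⟩ (∇ψ_k)(Θ_s) ) ds. Then (i) for all k ∈ {1,…,K} and all t ∈ [0,∞) it holds that ψ_k(Θ_t) = ψ_k(Θ_0), and (ii) for all s, t ∈ [0,∞) with s ≤ t it holds that 𝓛(Θ_t) = 𝓛(Θ_s) − ∫_s^t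 γ(u) ‖ (∇𝓛)(Θ_u) − Σ_{k=1}^K ‖(∇ψ_k)(Θ_u)‖⁻² ⟨(∇𝓛)(Θ_u), (∇ψ_k)(Θ_u)⟩ (∇ψ_k)(Θ_u) ‖² du ≤ 𝓛(Θ_s). -/
open MeasureTheory Set
open scoped RealInnerProductSpace

/-!
The vector field `V` driving the flow is the rejection of `∇𝓛` from the pairwise orthogonal
gradients `∇ψ_k`, i.e. its orthogonal projection onto their common orthogonal complement. Along
the flow, `d/dt φ(Θ_t) = -γ(t) ⟪∇φ(Θ_t), V(Θ_t)⟫` for every `C¹` function `φ`. For `φ = ψ_k` this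
vanishes since `V ⟂ ∇ψ_k`, and for `φ = 𝓛` it equals `-γ(t) ‖V(Θ_t)‖²` since `∇𝓛 - V ⟂ V`;
integrating gives both claims.
-/

section VectorRejection

variable {E ι : Type*} [NormedAddCommGroup E] [InnerProductSpace ℝ E] [Fintype ι]

noncomputable def vectorRejection (w : ι → E) (g : E) : E :=
  g - ∑ k, ((‖w k‖ ^ 2)⁻¹ * ⟪g, w k⟫) • w k

theorem inner_vectorRejection_of_pairwise {w : ι → E} (hw : Pairwise fun k l => ⟪w k, w l⟫ = 0)
    (g : E) (k : ι) : ⟪w k, vectorRejection w g⟫ = 0 := by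
  by_cases hk : w k = 0
  · rw [hk, inner_zero_left]
  have hk' : ‖w k‖ ≠ 0 := norm_ne_zero_iff.2 hk
  classical
  simp only [vectorRejection, inner_sub_right, inner_sum, real_inner_smul_right]
  rw [Finset.sum_eq_single k (fun l _ hlk => by rw [hw (Ne.symm hlk), mul_zero]) (by simp),
    real_inner_self_eq_norm_sq, real_inner_comm]
  field_simp
  ring

theorem inner_vectorRejection_eq_norm_sq {w : ι → E} (hw : Pairwise fun k l => ⟪w k, w l⟫ = 0)
    (g : E) : ⟪g, vectorRejection w g⟫ = ‖vectorRejection w g‖ ^ 2 := by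
  have hsum : ⟪∑ k, ((‖w k‖ ^ 2)⁻¹ * ⟪g, w k⟫) • w k, vectorRejection w g⟫ = 0 := by
    simp [sum_inner, real_inner_smul_left, inner_vectorRejection_of_pairwise hw]
  calc ⟪g, vectorRejection w g⟫
      = ⟪vectorRejection w g + ∑ k, ((‖w k‖ ^ 2)⁻¹ * ⟪g, w k⟫) • w k, vectorRejection w g⟫ := by
        rw [vectorRejection, sub_add_cancel]
    _ = ‖vectorRejection w g‖ ^ 2 := by
        rw [inner_add_left, hsum, add_zero, real_inner_self_eq_norm_sq]

theorem ContinuousOn.vectorRejection {X : Type*} [TopologicalSpace X] {w : ι → X → E} {g : X → E}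
    {s : Set X} (hw : ∀ k, ContinuousOn (w k) s) (hg : ContinuousOn g s)
    (hw₀ : ∀ x ∈ s, ∀ k, w k x ≠ 0) :
    ContinuousOn (fun x => vectorRejection (fun k => w k x) (g x)) s := by
  refine hg.sub (continuousOn_finsetSum _ fun k _ => ContinuousOn.smul ?_ (hw k))
  refine ContinuousOn.mul ?_ (hg.inner (hw k))
  exact ((hw k).norm.pow 2).inv₀ fun x hx => pow_ne_zero 2 (norm_ne_zero_iff.2 (hw₀ x hx k))

end VectorRejection

section Flow

variable {E : Type*} [NormedAddCommGroup E] [InnerProductSpace ℝ E] [CompleteSpace E]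

theorem ContDiffOn.continuousOn_gradient {φ : E → ℝ} {U : Set E} (hφ : ContDiffOn ℝ 1 φ U)
    (hU : IsOpen U) : ContinuousOn (gradient φ) U :=
  (InnerProductSpace.toDual ℝ E).symm.continuous.comp_continuousOn
    (hφ.continuousOn_fderiv_of_isOpen hU le_rfl)

theorem hasDerivWithinAt_Ici_of_eq_sub_integral {Θ f : ℝ → E} {a t : ℝ} {c : E}
    (hf : ContinuousOn f (Ici a)) (hΘ : ∀ t, a ≤ t → Θ t = c - ∫ s in a..t, f s) (ht : a ≤ t) :
    HasDerivWithinAt Θ (-f t) (Ici t) t := by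
  have hint : IntervalIntegrable f volume a t :=
    (hf.mono (uIcc_of_le ht ▸ Icc_subset_Ici_self)).intervalIntegrable
  have hsub : Ioi t ⊆ Ici a := Ioi_subset_Ici_self.trans (Ici_subset_Ici.2 ht)
  have hprim : HasDerivWithinAt (fun u => ∫ s in a..u, f s) (f t) (Ici t) t :=
    intervalIntegral.integral_hasDerivWithinAt_right hint
      ((hf.stronglyMeasurableAtFilter_nhdsWithin measurableSet_Ici t).filter_mono
        (nhdsWithin_mono t hsub))
      ((hf t ht).mono hsub)
  have hdiff := (hasDerivWithinAt_const t (Ici t) c).sub hprim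
  rw [zero_sub] at hdiff
  exact hdiff.congr (fun u hu => hΘ u (ht.trans hu)) (hΘ t ht)

theorem eq_sub_integral_inner_gradient_of_eq_sub_integral {φ : E → ℝ} {U : Set E}
    (hU : IsOpen U) (hφ : ContDiffOn ℝ 1 φ U) {Θ f : ℝ → E} {a s t : ℝ}
    (hf : ContinuousOn f (Ici a)) (hΘc : ContinuousOn Θ (Ici a)) (hΘU : ∀ t, a ≤ t → Θ t ∈ U)
    (hΘ : ∀ t, a ≤ t → Θ t = Θ a - ∫ u in a..t, f u) (hs : a ≤ s) (hst : s ≤ t) :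
    φ (Θ t) = φ (Θ s) - ∫ u in s..t, ⟪gradient φ (Θ u), f u⟫ := by
  have hIcc : Icc s t ⊆ Ici a := fun u hu => hs.trans hu.1
  have hderiv : ∀ u ∈ Ioo s t,
      HasDerivWithinAt (fun u => φ (Θ u)) (-⟪gradient φ (Θ u), f u⟫) (Ioi u) u := by
    intro u hu
    have hau : a ≤ u := hs.trans hu.1.le
    have hφu : DifferentiableAt ℝ φ (Θ u) :=
      (hφ.differentiableOn one_ne_zero).differentiableAt (hU.mem_nhds (hΘU u hau))
    have := hφu.hasFDerivAt.comp_hasDerivWithinAt u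
      (hasDerivWithinAt_Ici_of_eq_sub_integral hf hΘ hau)
    rw [map_neg, ← inner_gradient_left] at this
    exact this.mono Ioi_subset_Ici_self
  have hint : IntervalIntegrable (fun u => -⟪gradient φ (Θ u), f u⟫) volume s t := by
    refine ContinuousOn.intervalIntegrable ?_
    rw [uIcc_of_le hst]
    exact (((hφ.continuousOn_gradient hU).comp hΘc hΘU).inner hf).neg.mono hIcc
  have hFTC := intervalIntegral.integral_eq_sub_of_hasDeriv_right_of_le hst
    (hφ.continuousOn.comp (hΘc.mono hIcc) fun u hu => hΘU u (hIcc hu)) hderiv hint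
  rw [intervalIntegral.integral_neg, Function.comp_apply, Function.comp_apply] at hFTC
  linarith

end Flow

/-- Corollary 2.5 (Gradient flow dynamics on submanifolds, differentiable case). -/
theorem stmt3
    (𝔡 K : ℕ)
    (ψ : Fin K → EuclideanSpace ℝ (Fin 𝔡) → ℝ)
    (hψ : ∀ k, ContDiff ℝ 1 (ψ k))
    (U : Set (EuclideanSpace ℝ (Fin 𝔡)))
    (hUdef : U = {θ : EuclideanSpace ℝ (Fin 𝔡) | ∀ k : Fin K, 0 < ‖gradient (ψ k) θ‖})
    (𝓛 : EuclideanSpace ℝ (Fin 𝔡) → ℝ) (h𝓛 : ContDiffOn ℝ 1 𝓛 U)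
    (horth : ∀ θ ∈ U, ∀ k l : Fin K, k ≠ l →
      ⟪gradient (ψ k) θ, gradient (ψ l) θ⟫ = 0)
    (γ : ℝ → ℝ) (hγcont : ContinuousOn γ (Set.Ici 0)) (hγnonneg : ∀ t, 0 ≤ t → 0 ≤ γ t)
    (Θ : ℝ → EuclideanSpace ℝ (Fin 𝔡))
    (hΘcont : ContinuousOn Θ (Set.Ici 0))
    (hΘU : ∀ t : ℝ, 0 ≤ t → Θ t ∈ U)
    (hflow : ∀ t : ℝ, 0 ≤ t → Θ t = Θ 0 - ∫ s in (0:ℝ)..t,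
      γ s • (gradient 𝓛 (Θ s) - ∑ k : Fin K,
        ((‖gradient (ψ k) (Θ s)‖ ^ 2)⁻¹ * ⟪gradient 𝓛 (Θ s), gradient (ψ k) (Θ s)⟫) •
          gradient (ψ k) (Θ s))) :
    (∀ k : Fin K, ∀ t : ℝ, 0 ≤ t → ψ k (Θ t) = ψ k (Θ 0)) ∧
    (∀ s t : ℝ, 0 ≤ s → s ≤ t →
      (𝓛 (Θ t) = 𝓛 (Θ s) - ∫ u in s..t,
        γ u * ‖gradient 𝓛 (Θ u) - ∑ k : Fin K,
          ((‖gradient (ψ k) (Θ u)‖ ^ 2)⁻¹ * ⟪gradient 𝓛 (Θ u), gradient (ψ k) (Θ u)⟫) •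
            gradient (ψ k) (Θ u)‖ ^ 2) ∧
      𝓛 (Θ t) ≤ 𝓛 (Θ s)) := by
  set V := fun θ => vectorRejection (fun k => gradient (ψ k) θ) (gradient 𝓛 θ)
  have hgradψ : ∀ k, Continuous (gradient (ψ k)) := fun k =>
    continuousOn_univ.1 ((hψ k).contDiffOn.continuousOn_gradient isOpen_univ)
  have hUopen : IsOpen U := by
    simpa only [hUdef, ofPred_forall] using
      isOpen_iInter_of_finite fun k => isOpen_lt continuous_const (hgradψ k).norm
  have hpair : ∀ θ ∈ U, Pairwise fun k l => ⟪gradient (ψ k) θ, gradient (ψ l) θ⟫ = 0 :=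
    fun θ hθ k l hkl => horth θ hθ k l hkl
  have hV : ContinuousOn V U := by
    refine ContinuousOn.vectorRejection (fun k => (hgradψ k).continuousOn)
      (h𝓛.continuousOn_gradient hUopen) fun θ hθ k => ?_
    rw [hUdef] at hθ
    exact norm_pos_iff.1 (hθ k)
  have hf : ContinuousOn (fun s => γ s • V (Θ s)) (Ici 0) := hγcont.smul (hV.comp hΘcont hΘU)
  refine ⟨fun k t ht => ?_, fun s t hs hst => ?_⟩
  · have hrate : ∀ u ∈ uIcc 0 t, ⟪gradient (ψ k) (Θ u), γ u • V (Θ u)⟫ = 0 := by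
      intro u hu
      rw [uIcc_of_le ht] at hu
      rw [real_inner_smul_right, inner_vectorRejection_of_pairwise (hpair _ (hΘU u hu.1)),
        mul_zero]
    rw [eq_sub_integral_inner_gradient_of_eq_sub_integral isOpen_univ (hψ k).contDiffOn hf hΘcont
      (fun _ _ => mem_univ _) hflow le_rfl ht,
      intervalIntegral.integral_congr (g := fun _ => 0) hrate, intervalIntegral.integral_zero,
      sub_zero]
  · have hrate : ∀ u ∈ uIcc s t, ⟪gradient 𝓛 (Θ u), γ u • V (Θ u)⟫ = γ u * ‖V (Θ u)‖ ^ 2 := by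
      intro u hu
      rw [uIcc_of_le hst] at hu
      rw [real_inner_smul_right, inner_vectorRejection_eq_norm_sq (hpair _ (hΘU u (hs.trans hu.1)))]
    have hdissipation : 0 ≤ ∫ u in s..t, γ u * ‖V (Θ u)‖ ^ 2 :=
      intervalIntegral.integral_nonneg hst fun u hu =>
        mul_nonneg (hγnonneg u (hs.trans hu.1)) (sq_nonneg _)
    have h𝓛Θ :=
      eq_sub_integral_inner_gradient_of_eq_sub_integral hUopen h𝓛 hf hΘcont hΘU hflow hs hst
    rw [intervalIntegral.integral_congr (g := fun u => γ u * ‖V (Θ u)‖ ^ 2) hrate] at h𝓛Θ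
    exact ⟨h𝓛Θ, h𝓛Θ ▸ sub_le_self _ hdissipation⟩
end

section
/- For all θ ∈ ℳ (i.e., all θ = (θ₁,θ₂,θ₃) ∈ ℝ³ with θ₁² + θ₂² = 1) it holds that 𝔊₁(θ) = 2θ₃ ∫₀¹ ( θ₃(max{θ₁s+θ₂,0} − m(θ)) + f̄ − f(s) ) (θ₂² s − θ₁θ₂) 𝟙_{I^θ}(s) ds, 𝔊₂(θ) = 2θ₃ ∫₀¹ ( θ₃(max{θ₁s+θ₂,0} − m(θ)) + f̄ − f(s) ) (θ₁² − θ₁θ₂ s) 𝟙_{I^θ}(s) ds, and 𝔊₃(θ) = 2 ∫₀¹ ( θ₃(max{θ₁s+θ₂,0} − m(θ)) + f̄ − f(s) ) ( max{θ₁s+θ₂,0} − m(θ) ) ds. -/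
open MeasureTheory Real Set
open scoped RealInnerProductSpace

/-- The mean value `f̄ = ∫₀¹ f(x) dx` of the target function. -/
noncomputable def fbar (f : ℝ → ℝ) : ℝ := ∫ s in (0:ℝ)..1, f s

/-- `m(θ) = ∫₀¹ max{θ₁ s + θ₂, 0} ds`. -/
noncomputable def mfun (θ : EuclideanSpace ℝ (Fin 3)) : ℝ :=
  ∫ s in (0:ℝ)..1, max (θ 0 * s + θ 1) 0

/-- The risk function `𝓛`. -/
noncomputable def riskL (f : ℝ → ℝ) (θ : EuclideanSpace ℝ (Fin 3)) : ℝ :=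
  ∫ s in (0:ℝ)..1, (θ 2 * (max (θ 0 * s + θ 1) 0 - mfun θ) + fbar f - f s) ^ 2

/-- `g(θ) = θ₁² + θ₂²`; the manifold `ℳ` is `g⁻¹(1)`. -/
noncomputable def gfun (θ : EuclideanSpace ℝ (Fin 3)) : ℝ := θ 0 ^ 2 + θ 1 ^ 2

/-- The activity interval `I^θ = {s ∈ [0,1] : θ₁ s + θ₂ > 0}`. -/
def Iact (θ : EuclideanSpace ℝ (Fin 3)) : Set ℝ :=
  {s ∈ Set.Icc (0:ℝ) 1 | 0 < θ 0 * s + θ 1}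

/-! On `θ₁² + θ₂² = 1` the vector `𝔊(θ)` is the orthogonal projection of `∇𝓛(θ)` onto the tangent
space of `ℳ`, so its `i`-th component is the derivative of `𝓛` in the direction `eᵢ - nᵢ n`, where
`n = (θ₁, θ₂, 0)`. That derivative is computed by differentiating under the integral sign: the
integrand is Lipschitz in `θ` near a given point, uniformly in `s`, and differentiable in `θ` for
every `s` except the root of `θ₁ s + θ₂`, the ReLU contributing the indicator of `I^θ`. The term
coming from the derivative of `m(θ)` is a constant multiple of the residual, whose integral vanishes
by the choice of `f̄`, so it drops out. -/

open scoped Interval NNReal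

local notation "ℝ³" => EuclideanSpace ℝ (Fin 3)

lemma LipschitzOnWith.mul_of_norm_le {α R : Type*} [PseudoMetricSpace α] [SeminormedRing R]
    {g₁ g₂ : α → R} {s : Set α} {K₁ K₂ M₁ M₂ : ℝ≥0}
    (h₁ : LipschitzOnWith K₁ g₁ s) (h₂ : LipschitzOnWith K₂ g₂ s)
    (hM₁ : ∀ x ∈ s, ‖g₁ x‖ ≤ M₁) (hM₂ : ∀ x ∈ s, ‖g₂ x‖ ≤ M₂) :
    LipschitzOnWith (M₁ * K₂ + M₂ * K₁) (fun x => g₁ x * g₂ x) s := by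
  refine LipschitzOnWith.of_dist_le_mul fun x hx y hy => ?_
  have hsplit : g₁ x * g₂ x - g₁ y * g₂ y = g₁ x * (g₂ x - g₂ y) + (g₁ x - g₁ y) * g₂ y := by
    noncomm_ring
  rw [dist_eq_norm, hsplit]
  calc ‖g₁ x * (g₂ x - g₂ y) + (g₁ x - g₁ y) * g₂ y‖
      ≤ ‖g₁ x‖ * ‖g₂ x - g₂ y‖ + ‖g₁ x - g₁ y‖ * ‖g₂ y‖ :=
        (norm_add_le _ _).trans (add_le_add (norm_mul_le _ _) (norm_mul_le _ _))
    _ ≤ M₁ * (K₂ * dist x y) + (K₁ * dist x y) * M₂ := by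
        rw [← dist_eq_norm, ← dist_eq_norm]
        gcongr
        exacts [hM₁ x hx, h₂.dist_le_mul x hx y hy, h₁.dist_le_mul x hx y hy, hM₂ y hy]
    _ = ↑(M₁ * K₂ + M₂ * K₁) * dist x y := by push_cast; ring

lemma HasFDerivAt.max_zero_of_ne {E : Type*} [NormedAddCommGroup E] [NormedSpace ℝ E]
    {g : E → ℝ} {g' : E →L[ℝ] ℝ} {x : E} (hg : HasFDerivAt g g' x) (hx : g x ≠ 0) :
    HasFDerivAt (fun y => max (g y) 0) (if 0 < g x then g' else 0) x := by
  rcases hx.lt_or_gt with hneg | hpos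
  · rw [if_neg hneg.not_gt]
    refine (hasFDerivAt_const 0 x).congr_of_eventuallyEq ?_
    filter_upwards [hg.continuousAt.eventually_lt continuousAt_const hneg] with y hy
    exact max_eq_right hy.le
  · rw [if_pos hpos]
    refine hg.congr_of_eventuallyEq ?_
    filter_upwards [continuousAt_const.eventually_lt hg.continuousAt hpos] with y hy
    exact max_eq_left hy.le

lemma EuclideanSpace.gradient_apply {ι : Type*} [Fintype ι] [DecidableEq ι]
    (g : EuclideanSpace ℝ ι → ℝ) (x : EuclideanSpace ℝ ι) (i : ι) :
    gradient g x i = fderiv ℝ g x (EuclideanSpace.single i 1) := by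
  rw [← inner_gradient_left (𝕜 := ℝ), EuclideanSpace.inner_single_right]
  simp

noncomputable def preactivation (s : ℝ) : ℝ³ →L[ℝ] ℝ :=
  s • EuclideanSpace.proj 0 + EuclideanSpace.proj 1

@[simp]
lemma preactivation_apply (s : ℝ) (x : ℝ³) : preactivation s x = x 0 * s + x 1 := by
  simp [preactivation, mul_comm]

lemma norm_preactivation_le {s : ℝ} (hs : s ∈ Icc (0:ℝ) 1) : ‖preactivation s‖ ≤ 2 := by
  refine ContinuousLinearMap.opNorm_le_bound _ zero_le_two fun x => ?_
  have h₀ := PiLp.norm_apply_le x 0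
  have h₁ := PiLp.norm_apply_le x 1
  rw [preactivation_apply, Real.norm_eq_abs] at *
  calc |x 0 * s + x 1| ≤ |x 0| * |s| + |x 1| := by rw [← abs_mul]; exact abs_add_le _ _
    _ ≤ ‖x‖ * 1 + ‖x‖ := by
        gcongr
        exact abs_le.2 ⟨by linarith [hs.1], hs.2⟩
    _ = 2 * ‖x‖ := by ring

lemma lipschitzWith_relu_preactivation {s : ℝ} (hs : s ∈ Icc (0:ℝ) 1) :
    LipschitzWith 2 fun x : ℝ³ => max (x 0 * s + x 1) 0 := by
  have h : LipschitzWith 2 (preactivation s) :=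
    (preactivation s).lipschitz.weaken (by exact_mod_cast norm_preactivation_le hs)
  simpa using h.max_const 0

lemma intervalIntegrable_relu_preactivation (x : ℝ³) :
    IntervalIntegrable (fun s => max (x 0 * s + x 1) 0) volume 0 1 :=
  (by fun_prop : Continuous fun s => max (x 0 * s + x 1) 0).intervalIntegrable _ _

lemma lipschitzWith_mfun : LipschitzWith 2 mfun := by
  refine LipschitzWith.of_dist_le_mul fun x y => ?_
  rw [Real.dist_eq, mfun, mfun, ← intervalIntegral.integral_sub
    (intervalIntegrable_relu_preactivation x) (intervalIntegrable_relu_preactivation y)]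
  have hΙ : Ι (0:ℝ) 1 ⊆ Icc 0 1 := by
    rw [uIoc_of_le zero_le_one]; exact Ioc_subset_Icc_self
  have h : ∀ s ∈ Ι (0:ℝ) 1,
      ‖max (x 0 * s + x 1) 0 - max (y 0 * s + y 1) 0‖ ≤ 2 * dist x y := fun s hs => by
    simpa [← Real.dist_eq] using (lipschitzWith_relu_preactivation (hΙ hs)).dist_le_mul x y
  simpa using intervalIntegral.norm_integral_le_of_norm_le_const h

lemma ae_preactivation_ne_zero {θ : ℝ³} (hθ : 0 < |θ 0| + |θ 1|) :
    ∀ᵐ s : ℝ, θ 0 * s + θ 1 ≠ 0 := by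
  by_cases h₀ : θ 0 = 0
  · have h₁ : θ 1 ≠ 0 := by simpa [h₀] using hθ
    exact .of_forall fun s => by simpa [h₀] using h₁
  · refine measure_mono_null (fun s hs => ?_) (measure_singleton (-θ 1 / θ 0))
    have hs : θ 0 * s + θ 1 = 0 := by simpa using hs
    rw [mem_singleton_iff, eq_div_iff h₀]
    linarith

lemma hasFDerivAt_relu_preactivation {θ : ℝ³} {s : ℝ} (hs : s ∈ Icc (0:ℝ) 1)
    (hne : θ 0 * s + θ 1 ≠ 0) :
    HasFDerivAt (fun x : ℝ³ => max (x 0 * s + x 1) 0)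
      ((Iact θ).indicator (fun _ => (1:ℝ)) s • preactivation s) θ := by
  have h := (preactivation s).hasFDerivAt.max_zero_of_ne (x := θ) (by simpa using hne)
  have e : (Iact θ).indicator (fun _ => (1:ℝ)) s • preactivation s
      = if 0 < θ 0 * s + θ 1 then preactivation s else 0 := by
    by_cases hpos : 0 < θ 0 * s + θ 1 <;> simp [Iact, indicator, hs.1, hs.2, hpos]
  rw [e]
  simpa using h

lemma measurableSet_Iact (θ : ℝ³) : MeasurableSet (Iact θ) :=
  measurableSet_Icc.inter
    (measurableSet_lt measurable_const (by fun_prop : Measurable fun s : ℝ => θ 0 * s + θ 1))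

lemma aestronglyMeasurable_indicator_smul_preactivation (θ : ℝ³) (μ : Measure ℝ) :
    AEStronglyMeasurable (fun s => (Iact θ).indicator (fun _ => (1:ℝ)) s • preactivation s) μ :=
  ((measurable_const (a := (1:ℝ))).indicator (measurableSet_Iact θ)).aestronglyMeasurable.smul
    (by unfold preactivation; fun_prop : Continuous preactivation).aestronglyMeasurable

lemma differentiableAt_mfun {θ : ℝ³} (hθ : 0 < |θ 0| + |θ 1|) : DifferentiableAt ℝ mfun θ := by
  have hΙ : Ι (0:ℝ) 1 ⊆ Icc 0 1 := by
    rw [uIoc_of_le zero_le_one]; exact Ioc_subset_Icc_self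
  refine (intervalIntegral.hasFDerivAt_integral_of_dominated_loc_of_lip (bound := fun _ => 2)
    Filter.univ_mem
    (.of_forall fun x => (intervalIntegrable_relu_preactivation x).def'.aestronglyMeasurable)
    (intervalIntegrable_relu_preactivation θ)
    (aestronglyMeasurable_indicator_smul_preactivation θ _)
    (.of_forall fun s hs => ?_) intervalIntegrable_const
    ((ae_preactivation_ne_zero hθ).mono fun s hne hs =>
      hasFDerivAt_relu_preactivation (hΙ hs) hne)).2.differentiableAt
  simpa using (lipschitzWith_relu_preactivation (hΙ hs)).lipschitzOnWith (s := univ)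

noncomputable def riskResidual (f : ℝ → ℝ) (θ : ℝ³) (s : ℝ) : ℝ :=
  θ 2 * (max (θ 0 * s + θ 1) 0 - mfun θ) + fbar f - f s

lemma lipschitzWith_relu_preactivation_sub_mfun {s : ℝ} (hs : s ∈ Icc (0:ℝ) 1) :
    LipschitzWith 4 fun x : ℝ³ => max (x 0 * s + x 1) 0 - mfun x := by
  simpa [two_add_two_eq_four] using (lipschitzWith_relu_preactivation hs).sub lipschitzWith_mfun

section Bounded

variable {f : ℝ → ℝ} {S : Set ℝ³} {B : ℝ≥0} (hS : ∀ x ∈ S, ‖x‖ ≤ B) {s : ℝ} (hs : s ∈ Icc (0:ℝ) 1)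
include hS hs

lemma norm_relu_preactivation_sub_mfun_le {x : ℝ³} (hx : x ∈ S) :
    ‖max (x 0 * s + x 1) 0 - mfun x‖ ≤ 4 * B :=
  ((lipschitzWith_relu_preactivation_sub_mfun hs).norm_le_mul (by simp [mfun]) x).trans
    (by push_cast; gcongr; exact hS x hx)

lemma lipschitzOnWith_riskResidual : LipschitzOnWith (8 * B) (fun x => riskResidual f x s) S := by
  have h₂ : LipschitzWith 1 fun x : ℝ³ => x 2 :=
    LipschitzWith.of_dist_le_mul fun x y => by simpa using PiLp.dist_apply_le x y 2
  have hprod := h₂.lipschitzOnWith.mul_of_norm_le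
    (lipschitzWith_relu_preactivation_sub_mfun hs).lipschitzOnWith
    (fun x hx => (PiLp.norm_apply_le x 2).trans (hS x hx)) (M₂ := 4 * B)
    (fun x hx => by exact_mod_cast norm_relu_preactivation_sub_mfun_le hS hs hx)
  have h := hprod.add (LipschitzWith.const (fbar f - f s)).lipschitzOnWith
  have hK : 8 * B = B * 4 + 4 * B * 1 + 0 := by ring
  have hF : (fun x => riskResidual f x s)
      = fun x => x 2 * (max (x 0 * s + x 1) 0 - mfun x) + (fbar f - f s) := by
    ext x; simp only [riskResidual]; ring
  rwa [hK, hF]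

lemma norm_riskResidual_le {C : ℝ≥0} (hC : ‖fbar f - f s‖ ≤ C) {x : ℝ³} (hx : x ∈ S) :
    ‖riskResidual f x s‖ ≤ 4 * B ^ 2 + C :=
  calc ‖riskResidual f x s‖
      = ‖x 2 * (max (x 0 * s + x 1) 0 - mfun x) + (fbar f - f s)‖ := by
        rw [riskResidual, add_sub_assoc]
    _ ≤ ‖x 2‖ * ‖max (x 0 * s + x 1) 0 - mfun x‖ + ‖fbar f - f s‖ :=
        (norm_add_le _ _).trans (by rw [norm_mul])
    _ ≤ B * (4 * B) + C := by
        gcongr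
        exacts [(PiLp.norm_apply_le x 2).trans (hS x hx),
          norm_relu_preactivation_sub_mfun_le hS hs hx]
    _ = 4 * B ^ 2 + C := by ring

lemma lipschitzOnWith_riskResidual_sq {C : ℝ≥0} (hC : ‖fbar f - f s‖ ≤ C) :
    LipschitzOnWith (2 * (4 * B ^ 2 + C) * (8 * B)) (fun x => riskResidual f x s ^ 2) S := by
  have hM : ∀ x ∈ S, ‖riskResidual f x s‖ ≤ ((4 * B ^ 2 + C : ℝ≥0) : ℝ) := fun x hx => by
    exact_mod_cast norm_riskResidual_le hS hs hC hx
  have h := (lipschitzOnWith_riskResidual hS hs).mul_of_norm_le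
    (lipschitzOnWith_riskResidual hS hs) hM hM
  simpa only [sq, two_mul, add_mul] using h

end Bounded

noncomputable def riskResidualFDeriv (θ : ℝ³) (s : ℝ) : ℝ³ →L[ℝ] ℝ :=
  θ 2 • ((Iact θ).indicator (fun _ => (1:ℝ)) s • preactivation s - fderiv ℝ mfun θ) +
    (max (θ 0 * s + θ 1) 0 - mfun θ) • EuclideanSpace.proj 2

lemma hasFDerivAt_riskResidual (f : ℝ → ℝ) {θ : ℝ³} (hθ : 0 < |θ 0| + |θ 1|) {s : ℝ}
    (hs : s ∈ Icc (0:ℝ) 1) (hne : θ 0 * s + θ 1 ≠ 0) :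
    HasFDerivAt (fun x => riskResidual f x s) (riskResidualFDeriv θ s) θ :=
  ((((EuclideanSpace.proj (2 : Fin 3)).hasFDerivAt (x := θ)).mul
    ((hasFDerivAt_relu_preactivation hs hne).sub
      (differentiableAt_mfun hθ).hasFDerivAt)).add_const _).sub_const _

lemma continuousOn_riskResidual {f : ℝ → ℝ} (hf : ContinuousOn f (Icc 0 1)) (x : ℝ³) :
    ContinuousOn (riskResidual f x) (Icc 0 1) :=
  (Continuous.continuousOn (by fun_prop)).sub hf

lemma hasFDerivAt_riskL {f : ℝ → ℝ} (hf : ContinuousOn f (Icc 0 1)) {θ : ℝ³}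
    (hθ : 0 < |θ 0| + |θ 1|) :
    IntervalIntegrable (fun s => (2 * riskResidual f θ s) • riskResidualFDeriv θ s) volume 0 1 ∧
      HasFDerivAt (riskL f)
        (∫ s in (0:ℝ)..1, (2 * riskResidual f θ s) • riskResidualFDeriv θ s) θ := by
  have hΙ : Ι (0:ℝ) 1 ⊆ Icc 0 1 := by
    rw [uIoc_of_le zero_le_one]; exact Ioc_subset_Icc_self
  obtain ⟨C, hC⟩ := isCompact_Icc.exists_bound_of_continuousOn (continuousOn_const.sub hf)
  have hS : ∀ x ∈ Metric.ball θ 1, ‖x‖ ≤ ((‖θ‖₊ + 1 : ℝ≥0) : ℝ) := fun x hx => by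
    simpa using norm_le_norm_add_const_of_dist_le (Metric.mem_ball.1 hx).le
  have hmeas : ∀ x : ℝ³, AEStronglyMeasurable (riskResidual f x) (volume.restrict (Ι 0 1)) :=
    fun x => ((continuousOn_riskResidual hf x).mono hΙ).aestronglyMeasurable measurableSet_uIoc
  change IntervalIntegrable _ volume 0 1 ∧
    HasFDerivAt (fun x => ∫ s in (0:ℝ)..1, riskResidual f x s ^ 2) _ θ
  refine intervalIntegral.hasFDerivAt_integral_of_dominated_loc_of_lip
    (bound := fun _ => ((2 * (4 * (‖θ‖₊ + 1) ^ 2 + C.toNNReal) * (8 * (‖θ‖₊ + 1)) : ℝ≥0) : ℝ))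
    (Metric.ball_mem_nhds θ one_pos) (.of_forall fun x => (hmeas x).pow 2)
    (((continuousOn_riskResidual hf θ).pow 2).intervalIntegrable_of_Icc zero_le_one)
    (((hmeas θ).const_mul 2).smul ?_) (.of_forall fun s hs => ?_) intervalIntegrable_const
    ((ae_preactivation_ne_zero hθ).mono fun s hne hs => ?_)
  · exact (((aestronglyMeasurable_indicator_smul_preactivation θ _).sub
      aestronglyMeasurable_const).const_smul (θ 2)).add
      ((by fun_prop : Continuous fun s => max (θ 0 * s + θ 1) 0 - mfun θ).aestronglyMeasurable.smul
        aestronglyMeasurable_const)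
  · rw [Real.nnabs_coe]
    exact lipschitzOnWith_riskResidual_sq hS (hΙ hs) ((hC s (hΙ hs)).trans (Real.le_coe_toNNReal C))
  · simpa using (hasFDerivAt_riskResidual f hθ (hΙ hs) hne).pow 2

lemma integral_riskResidual {f : ℝ → ℝ} (hf : ContinuousOn f (Icc 0 1)) (θ : ℝ³) :
    ∫ s in (0:ℝ)..1, riskResidual f θ s = 0 := by
  have hR := intervalIntegrable_relu_preactivation θ
  calc ∫ s in (0:ℝ)..1, riskResidual f θ s
      = ∫ s in (0:ℝ)..1, (θ 2 * max (θ 0 * s + θ 1) 0 + (fbar f - θ 2 * mfun θ) - f s) :=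
        intervalIntegral.integral_congr fun s _ => by simp only [riskResidual]; ring
    _ = θ 2 * mfun θ + (fbar f - θ 2 * mfun θ) - fbar f := by
        rw [intervalIntegral.integral_sub ((hR.const_mul _).add intervalIntegrable_const)
            (hf.intervalIntegrable_of_Icc zero_le_one),
          intervalIntegral.integral_add (hR.const_mul _) intervalIntegrable_const,
          intervalIntegral.integral_const_mul]
        simp [mfun, fbar]
    _ = 0 := by ring

lemma fderiv_riskL_apply {f : ℝ → ℝ} (hf : ContinuousOn f (Icc 0 1)) {θ : ℝ³}
    (hθ : 0 < |θ 0| + |θ 1|) (a b c : ℝ) :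
    fderiv ℝ (riskL f) θ !₂[a, b, c] = 2 * ∫ s in (0:ℝ)..1, riskResidual f θ s *
      (θ 2 * ((a * s + b) * (Iact θ).indicator (fun _ => (1:ℝ)) s) +
        (max (θ 0 * s + θ 1) 0 - mfun θ) * c) := by
  set v : ℝ³ := !₂[a, b, c]
  obtain ⟨hint, hD⟩ := hasFDerivAt_riskL hf hθ
  have hint_v : IntervalIntegrable
      (fun s => ((2 * riskResidual f θ s) • riskResidualFDeriv θ s) v) volume 0 1 :=
    ⟨hint.1.apply_continuousLinearMap v, hint.2.apply_continuousLinearMap v⟩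
  set κ := 2 * θ 2 * fderiv ℝ mfun θ v
  rw [hD.fderiv, ContinuousLinearMap.intervalIntegral_apply hint v,
    ← intervalIntegral.integral_const_mul]
  symm
  calc _ = ∫ s in (0:ℝ)..1,
        ((2 * riskResidual f θ s) • riskResidualFDeriv θ s) v + κ * riskResidual f θ s :=
        intervalIntegral.integral_congr fun s _ => by
          simp only [riskResidualFDeriv, smul_add, add_apply, smul_apply, sub_apply,
            preactivation_apply, PiLp.proj_apply, smul_eq_mul, Matrix.cons_val, v, κ]
          ring
    _ = _ := by
        rw [intervalIntegral.integral_add hint_v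
            (((continuousOn_riskResidual hf θ).intervalIntegrable_of_Icc zero_le_one).const_mul κ),
          intervalIntegral.integral_const_mul, integral_riskResidual hf, mul_zero, add_zero]

lemma gradient_gfun (θ : ℝ³) : gradient gfun θ = (2:ℝ) • !₂[θ 0, θ 1, 0] := by
  have hD := ((EuclideanSpace.proj (𝕜 := ℝ) (0 : Fin 3)).hasFDerivAt.pow 2).add
    ((EuclideanSpace.proj (𝕜 := ℝ) (1 : Fin 3)).hasFDerivAt.pow 2) (x := θ)
  ext i
  rw [EuclideanSpace.gradient_apply,
    (hD.congr_of_eventuallyEq (f₁ := gfun) (.of_forall fun _ => rfl)).fderiv]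
  fin_cases i <;> simp

noncomputable def tangentialGradient (L : ℝ³ → ℝ) (θ : ℝ³) : ℝ³ :=
  gradient L θ - ((‖gradient gfun θ‖ ^ 2)⁻¹ * ⟪gradient L θ, gradient gfun θ⟫) • gradient gfun θ

lemma tangentialGradient_apply {L : ℝ³ → ℝ} {θ : ℝ³} (hθ : gfun θ = 1) :
    tangentialGradient L θ 0 = fderiv ℝ L θ !₂[θ 1 ^ 2, -(θ 0 * θ 1), 0] ∧
    tangentialGradient L θ 1 = fderiv ℝ L θ !₂[-(θ 0 * θ 1), θ 0 ^ 2, 0] ∧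
    tangentialGradient L θ 2 = fderiv ℝ L θ !₂[0, 0, 1] := by
  set n : ℝ³ := !₂[θ 0, θ 1, 0]
  have hθ' : θ 0 ^ 2 + θ 1 ^ 2 = 1 := hθ
  have hn : ‖n‖ ^ 2 = 1 := by
    rw [EuclideanSpace.norm_sq_eq, Fin.sum_univ_three]
    simpa [n] using hθ'
  have key : ∀ i,
      tangentialGradient L θ i = fderiv ℝ L θ (EuclideanSpace.single i 1 - n i • n) := by
    intro i
    rw [tangentialGradient, gradient_gfun, norm_smul, mul_pow, hn, inner_smul_right,
      inner_gradient_left]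
    simp only [PiLp.sub_apply, PiLp.smul_apply, smul_eq_mul, map_sub, map_smul,
      EuclideanSpace.gradient_apply]
    rw [Real.norm_two]
    ring
  refine ⟨?_, ?_, ?_⟩ <;> rw [key] <;> congr 1 <;> ext j <;> fin_cases j <;>
    simp [n, mul_comm, show 1 - θ 0 * θ 0 = θ 1 ^ 2 by linarith,
      show 1 - θ 1 * θ 1 = θ 0 ^ 2 by linarith]

theorem stmt5_general
    (f : ℝ → ℝ) (hf : ContinuousOn f (Set.Icc 0 1))
    (𝔊 : EuclideanSpace ℝ (Fin 3) → EuclideanSpace ℝ (Fin 3))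
    (h𝔊 : ∀ θ : EuclideanSpace ℝ (Fin 3), 0 < |θ 0| + |θ 1| →
      𝔊 θ = gradient (riskL f) θ -
        ((‖gradient gfun θ‖ ^ 2)⁻¹ * ⟪gradient (riskL f) θ, gradient gfun θ⟫) •
          gradient gfun θ) :
    ∀ θ : EuclideanSpace ℝ (Fin 3), gfun θ = 1 →
      𝔊 θ 0 = 2 * θ 2 * ∫ s in (0:ℝ)..1,
          (θ 2 * (max (θ 0 * s + θ 1) 0 - mfun θ) + fbar f - f s) * (θ 1 ^ 2 * s - θ 0 * θ 1)
            * (Iact θ).indicator (fun _ => (1:ℝ)) s ∧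
      𝔊 θ 1 = 2 * θ 2 * ∫ s in (0:ℝ)..1,
          (θ 2 * (max (θ 0 * s + θ 1) 0 - mfun θ) + fbar f - f s) * (θ 0 ^ 2 - θ 0 * θ 1 * s)
            * (Iact θ).indicator (fun _ => (1:ℝ)) s ∧
      𝔊 θ 2 = 2 * ∫ s in (0:ℝ)..1,
          (θ 2 * (max (θ 0 * s + θ 1) 0 - mfun θ) + fbar f - f s)
            * (max (θ 0 * s + θ 1) 0 - mfun θ) := by
  intro θ hθ
  have hθ' : θ 0 ^ 2 + θ 1 ^ 2 = 1 := hθ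
  have hpos : 0 < |θ 0| + |θ 1| := by
    nlinarith [abs_nonneg (θ 0), abs_nonneg (θ 1), sq_abs (θ 0), sq_abs (θ 1)]
  have h𝔊θ : 𝔊 θ = tangentialGradient (riskL f) θ := h𝔊 θ hpos
  obtain ⟨h₀, h₁, h₂⟩ := tangentialGradient_apply (L := riskL f) hθ
  refine ⟨?_, ?_, ?_⟩ <;>
    simp only [h𝔊θ, h₀, h₁, h₂, fderiv_riskL_apply hf hpos, mul_assoc 2 (θ 2),
      ← intervalIntegral.integral_const_mul] <;>
    exact intervalIntegral.integral_congr fun s _ => by simp only [riskResidual]; ring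

/-- Lemma 3.1(i): explicit formulas for the components of the modified gradient `𝔊`
on the manifold `ℳ = {θ : θ₁² + θ₂² = 1}`. -/
theorem stmt5
    (f : ℝ → ℝ) (hf : ContinuousOn f (Set.Icc 0 1))
    (h𝓛diff : ∀ θ : EuclideanSpace ℝ (Fin 3), 0 < |θ 0| + |θ 1| →
      DifferentiableAt ℝ (riskL f) θ)
    (𝔊 : EuclideanSpace ℝ (Fin 3) → EuclideanSpace ℝ (Fin 3))
    (h𝔊meas : Measurable 𝔊)
    (h𝔊loc : ∀ θ : EuclideanSpace ℝ (Fin 3),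
      ∃ r > (0:ℝ), ∃ C : ℝ, ∀ x ∈ Metric.ball θ r, ‖𝔊 x‖ ≤ C)
    (h𝔊 : ∀ θ : EuclideanSpace ℝ (Fin 3), 0 < |θ 0| + |θ 1| →
      𝔊 θ = gradient (riskL f) θ -
        ((‖gradient gfun θ‖ ^ 2)⁻¹ * ⟪gradient (riskL f) θ, gradient gfun θ⟫) •
          gradient gfun θ) :
    ∀ θ : EuclideanSpace ℝ (Fin 3), gfun θ = 1 →
      𝔊 θ 0 = 2 * θ 2 * ∫ s in (0:ℝ)..1,
          (θ 2 * (max (θ 0 * s + θ 1) 0 - mfun θ) + fbar f - f s) * (θ 1 ^ 2 * s - θ 0 * θ 1)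
            * (Iact θ).indicator (fun _ => (1:ℝ)) s ∧
      𝔊 θ 1 = 2 * θ 2 * ∫ s in (0:ℝ)..1,
          (θ 2 * (max (θ 0 * s + θ 1) 0 - mfun θ) + fbar f - f s) * (θ 0 ^ 2 - θ 0 * θ 1 * s)
            * (Iact θ).indicator (fun _ => (1:ℝ)) s ∧
      𝔊 θ 2 = 2 * ∫ s in (0:ℝ)..1,
          (θ 2 * (max (θ 0 * s + θ 1) 0 - mfun θ) + fbar f - f s)
            * (max (θ 0 * s + θ 1) 0 - mfun θ) :=
  stmt5_general f hf 𝔊 h𝔊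
end

section
/- For every ε > 0 it holds that sup_{t ∈ [0,∞)} [ ‖Θ(t)‖ · 𝟙_{[ε,1)}(μ(I^{Θ(t)})) ] < ∞, where μ denotes Lebesgue measure on ℝ; i.e., the gradient flow trajectory is bounded on the set of times t at which the Lebesgue measure of the activity interval I^{Θ(t)} lies in [ε, 1). -/
/-!
Along the flow, `Θ` is Lipschitz on bounded time intervals because `𝔊` is locally bounded, so
for every locally Lipschitz `φ` the function `φ ∘ Θ` is absolutely continuous, with a.e.
derivative `-φ'(Θ) 𝔊(Θ)`. As `𝔊` is the component of `∇𝓛` orthogonal to `∇g`, this derivative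
vanishes for `φ = g` (also where `θ₁ = θ₂ = 0`: there `θ` minimizes `g`) and equals `-‖𝔊‖²` for
`φ = 𝓛`. Hence `Θ` stays on `ℳ` and `𝓛 ∘ Θ` is nonincreasing.

On `ℳ`, `𝓛(θ) ≥ θ₃² ∫ (σ_θ - m(θ))² / 2 - ∫ (f̄ - f)²` with `σ_θ(s) = max{θ₁ s + θ₂, 0}`. If
`μ(I^θ) ∈ [ε, 1)`, the kink of `σ_θ` lies in `[0, 1]`, so `|θ₂| ≤ |θ₁|`, i.e. `θ₁² ≥ 1/2`, and
`σ_θ` rises with slope `|θ₁|` across an interval of length `ε`; this forces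
`∫ (σ_θ - m)² ≥ ε³/128` for every constant `m`, which bounds `θ₃²` by a multiple of
`(𝓛(Θ(0)) + ∫ (f̄ - f)²) / ε³`.
-/

open MeasureTheory Real Set
open scoped RealInnerProductSpace

open scoped NNReal Topology

theorem AbsolutelyContinuousOnInterval.le_of_ae_hasDerivAt_nonpos {f : ℝ → ℝ} {a b : ℝ}
    (hab : a ≤ b) (hf : AbsolutelyContinuousOnInterval f a b)
    (hf' : ∀ᵐ x, x ∈ Ioo a b → ∃ d ≤ 0, HasDerivAt f d x) : f b ≤ f a := by
  have hderiv : 0 ≤ᵐ[volume.restrict (Icc a b)] fun x => -deriv f x := by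
    rw [← Measure.restrict_congr_set Ioo_ae_eq_Icc]
    filter_upwards [(ae_restrict_iff' measurableSet_Ioo).2 hf'] with x hx
    obtain ⟨d, hd, hfd⟩ := hx
    simpa [hfd.deriv] using hd
  have := intervalIntegral.integral_nonneg_of_ae_restrict hab hderiv
  rw [intervalIntegral.integral_neg, hf.integral_deriv_eq_sub] at this
  linarith

theorem LocallyLipschitz.absolutelyContinuousOnInterval_comp {E F : Type*}
    [PseudoMetricSpace E] [SeminormedAddCommGroup F] {φ : E → F} (hφ : LocallyLipschitz φ)
    {Θ : ℝ → E} {a b : ℝ} {M : ℝ≥0} (hΘ : LipschitzOnWith M Θ (uIcc a b)) :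
    AbsolutelyContinuousOnInterval (φ ∘ Θ) a b := by
  have hK : IsCompact (Θ '' uIcc a b) := isCompact_uIcc.image_of_continuousOn hΘ.continuousOn
  obtain ⟨K, hφK⟩ := hφ.locallyLipschitzOn.exists_lipschitzOnWith_of_compact hK
  exact (hφK.comp hΘ (mapsTo_image _ _)).absolutelyContinuousOnInterval

theorem IsCompact.exists_bound_of_locally_bounded {X E : Type*} [TopologicalSpace X]
    [SeminormedAddCommGroup E] {K : Set X} (hK : IsCompact K) {G : X → E}
    (hG : ∀ x, ∃ U ∈ 𝓝 x, ∃ C, ∀ y ∈ U, ‖G y‖ ≤ C) : ∃ C, ∀ x ∈ K, ‖G x‖ ≤ C := by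
  refine hK.induction_on ⟨0, by simp⟩ (fun s t hst ⟨C, hC⟩ => ⟨C, fun x hx => hC x (hst hx)⟩)
    (fun s t ⟨C, hC⟩ ⟨D, hD⟩ => ⟨max C D, ?_⟩) fun x _ => ?_
  · rintro y (hy | hy)
    exacts [(hC y hy).trans (le_max_left _ _), (hD y hy).trans (le_max_right _ _)]
  · obtain ⟨U, hU, hGU⟩ := hG x
    exact ⟨U, mem_nhdsWithin_of_mem_nhds hU, hGU⟩

section IntegralEquation

variable {E : Type*} [NormedAddCommGroup E] [NormedSpace ℝ E] {h : ℝ → E} {Θ : ℝ → E} {T : ℝ}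

theorem continuousOn_of_eq_sub_integral (hT : 0 ≤ T) (hh : IntervalIntegrable h volume 0 T)
    (hΘ : ∀ t ∈ Icc 0 T, Θ t = Θ 0 - ∫ u in (0:ℝ)..t, h u) : ContinuousOn Θ (Icc 0 T) := by
  have hprim := intervalIntegral.continuousOn_primitive_interval (μ := volume) (a := 0) (b := T)
    (by rw [uIcc_of_le hT]; exact (intervalIntegrable_iff_integrableOn_Icc_of_le hT).1 hh)
  rw [uIcc_of_le hT] at hprim
  exact (continuousOn_const.sub hprim).congr hΘ

theorem lipschitzOnWith_of_eq_sub_integral {M : ℝ≥0} (hT : 0 ≤ T)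
    (hh : IntervalIntegrable h volume 0 T)
    (hΘ : ∀ t ∈ Icc 0 T, Θ t = Θ 0 - ∫ u in (0:ℝ)..t, h u) (hM : ∀ u ∈ Icc 0 T, ‖h u‖ ≤ M) :
    LipschitzOnWith M Θ (Icc 0 T) := by
  have hint : ∀ t ∈ Icc 0 T, IntervalIntegrable h volume 0 t := fun t ht =>
    hh.mono_set (uIcc_subset_uIcc left_mem_uIcc (by rwa [uIcc_of_le hT]))
  refine LipschitzOnWith.of_dist_le_mul fun s hs t ht => ?_
  rw [dist_eq_norm, hΘ s hs, hΘ t ht, sub_sub_sub_cancel_left,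
    intervalIntegral.integral_interval_sub_left (hint t ht) (hint s hs), Real.dist_eq,
    abs_sub_comm]
  exact intervalIntegral.norm_integral_le_of_norm_le_const fun u hu =>
    hM u (uIcc_subset_Icc hs ht (uIoc_subset_uIcc hu))

theorem ae_hasDerivAt_of_eq_sub_integral [CompleteSpace E] (hh : IntervalIntegrable h volume 0 T)
    (hΘ : ∀ t ∈ Icc 0 T, Θ t = Θ 0 - ∫ u in (0:ℝ)..t, h u) :
    ∀ᵐ t, t ∈ Ioo 0 T → HasDerivAt Θ (-h t) t := by
  filter_upwards [hh.ae_hasDerivAt_integral] with t ht htT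
  have hT : 0 ≤ T := htT.1.le.trans htT.2.le
  have hprim := (ht (by rw [uIcc_of_le hT]; exact Ioo_subset_Icc_self htT) 0
    left_mem_uIcc).const_sub (Θ 0)
  refine hprim.congr_of_eventuallyEq ?_
  filter_upwards [isOpen_Ioo.mem_nhds htT] with u hu
  exact hΘ u (Ioo_subset_Icc_self hu)

end IntegralEquation

theorem exists_lipschitzOnWith_flow {E : Type*} [NormedAddCommGroup E] [NormedSpace ℝ E]
    {G : E → E} (hG : ∀ θ : E, ∃ r > (0:ℝ), ∃ C : ℝ, ∀ x ∈ Metric.ball θ r, ‖G x‖ ≤ C)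
    {Θ : ℝ → E} (hint : ∀ t : ℝ, 0 ≤ t → IntervalIntegrable (fun u => G (Θ u)) volume 0 t)
    (hΘ : ∀ t : ℝ, 0 ≤ t → Θ t = Θ 0 - ∫ u in (0:ℝ)..t, G (Θ u)) {T : ℝ} (hT : 0 ≤ T) :
    ∃ M, LipschitzOnWith M Θ (Icc 0 T) := by
  have hΘT : ∀ t ∈ Icc 0 T, Θ t = Θ 0 - ∫ u in (0:ℝ)..t, G (Θ u) := fun t ht => hΘ t ht.1
  have hK := isCompact_Icc.image_of_continuousOn
    (continuousOn_of_eq_sub_integral hT (hint T hT) hΘT)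
  obtain ⟨C, hC⟩ := hK.exists_bound_of_locally_bounded fun θ => by
    obtain ⟨r, hr, C, hC⟩ := hG θ
    exact ⟨_, Metric.ball_mem_nhds θ hr, C, hC⟩
  exact ⟨C.toNNReal, lipschitzOnWith_of_eq_sub_integral hT (hint T hT) hΘT fun u hu =>
    (hC _ (mem_image_of_mem Θ hu)).trans (le_coe_toNNReal C)⟩

theorem comp_flow_le_of_fderiv_nonneg {E : Type*} [NormedAddCommGroup E] [NormedSpace ℝ E]
    [CompleteSpace E] {G : E → E}
    (hG : ∀ θ : E, ∃ r > (0:ℝ), ∃ C : ℝ, ∀ x ∈ Metric.ball θ r, ‖G x‖ ≤ C)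
    {Θ : ℝ → E} (hint : ∀ t : ℝ, 0 ≤ t → IntervalIntegrable (fun u => G (Θ u)) volume 0 t)
    (hΘ : ∀ t : ℝ, 0 ≤ t → Θ t = Θ 0 - ∫ u in (0:ℝ)..t, G (Θ u))
    {φ : E → ℝ} (hφ : LocallyLipschitz φ)
    (hdesc : ∀ t : ℝ, 0 ≤ t → ∃ φ' : E →L[ℝ] ℝ, HasFDerivAt φ φ' (Θ t) ∧ 0 ≤ φ' (G (Θ t)))
    {t : ℝ} (ht : 0 ≤ t) : φ (Θ t) ≤ φ (Θ 0) := by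
  obtain ⟨M, hM⟩ := exists_lipschitzOnWith_flow hG hint hΘ ht
  rw [← uIcc_of_le ht] at hM
  refine (hφ.absolutelyContinuousOnInterval_comp hM).le_of_ae_hasDerivAt_nonpos ht ?_
  filter_upwards [ae_hasDerivAt_of_eq_sub_integral (hint t ht) fun u hu => hΘ u hu.1]
    with u hΘu hu
  obtain ⟨φ', hφ', hnonneg⟩ := hdesc u hu.1.le
  exact ⟨φ' (-G (Θ u)), by simpa using hnonneg, hφ'.comp_hasDerivAt u (hΘu hu)⟩

section OrthComponent

variable {F : Type*} [NormedAddCommGroup F] [InnerProductSpace ℝ F]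

/-- The component of `a` orthogonal to `b`; since `0⁻¹ = 0`, it is `a` itself when `b = 0`. -/
noncomputable def orthComponent (b a : F) : F := a - ((‖b‖ ^ 2)⁻¹ * ⟪a, b⟫) • b

theorem inner_orthComponent_eq_zero (b a : F) : ⟪b, orthComponent b a⟫ = 0 := by
  rcases eq_or_ne b 0 with rfl | hb
  · simp
  rw [orthComponent, inner_sub_right, inner_smul_right, real_inner_self_eq_norm_sq,
    real_inner_comm]
  field_simp
  ring

theorem inner_orthComponent_eq_norm_sq (b a : F) :
    ⟪a, orthComponent b a⟫ = ‖orthComponent b a‖ ^ 2 := by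
  have ha : a = orthComponent b a + ((‖b‖ ^ 2)⁻¹ * ⟪a, b⟫) • b := (sub_add_cancel _ _).symm
  nth_rewrite 1 [ha]
  rw [inner_add_left, real_inner_smul_left, inner_orthComponent_eq_zero,
    real_inner_self_eq_norm_sq, mul_zero, add_zero]

end OrthComponent

theorem abs_intervalIntegral_sub_le {F G : ℝ → ℝ} {a b C : ℝ} (hab : a ≤ b)
    (hF : IntervalIntegrable F volume a b) (hG : IntervalIntegrable G volume a b)
    (h : ∀ s ∈ Icc a b, |F s - G s| ≤ C) :
    |(∫ s in a..b, F s) - ∫ s in a..b, G s| ≤ C * (b - a) := by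
  rw [← intervalIntegral.integral_sub hF hG, ← abs_of_nonneg (sub_nonneg.2 hab)]
  exact intervalIntegral.norm_integral_le_of_norm_le_const fun s hs =>
    (Real.norm_eq_abs _).trans_le (h s (uIcc_of_le hab ▸ uIoc_subset_uIcc hs))

theorem abs_mul_sub_mul_le (x y x' y' : ℝ) :
    |x * y - x' * y'| ≤ |x - x'| * |y| + |x'| * |y - y'| := by
  rw [← abs_mul, ← abs_mul, show x * y - x' * y' = (x - x') * y + x' * (y - y') by ring]
  exact abs_add_le _ _

section Estimates

variable {θ : EuclideanSpace ℝ (Fin 3)} {s : ℝ}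

theorem abs_affine_le (hs : s ∈ Icc (0:ℝ) 1) : |θ 0 * s + θ 1| ≤ 2 * ‖θ‖ := by
  have h0 : |θ 0| ≤ ‖θ‖ := PiLp.norm_apply_le θ 0
  have h1 : |θ 1| ≤ ‖θ‖ := PiLp.norm_apply_le θ 1
  have hs' : |s| ≤ 1 := abs_le.2 ⟨by linarith [hs.1], hs.2⟩
  calc |θ 0 * s + θ 1| ≤ |θ 0| * |s| + |θ 1| := (abs_add_le _ _).trans_eq (by rw [abs_mul])
    _ ≤ 2 * ‖θ‖ := by nlinarith [abs_nonneg (θ 0), abs_nonneg s]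

theorem abs_neuron_sub_le (θ θ' : EuclideanSpace ℝ (Fin 3)) (hs : s ∈ Icc (0:ℝ) 1) :
    |max (θ 0 * s + θ 1) 0 - max (θ' 0 * s + θ' 1) 0| ≤ 2 * ‖θ - θ'‖ := by
  refine (abs_max_sub_max_le_abs _ _ _).trans ?_
  have hsub : θ 0 * s + θ 1 - (θ' 0 * s + θ' 1) = (θ - θ') 0 * s + (θ - θ') 1 := by
    simp only [PiLp.sub_apply]
    ring
  exact hsub ▸ abs_affine_le hs

theorem abs_neuron_le (hs : s ∈ Icc (0:ℝ) 1) : |max (θ 0 * s + θ 1) 0| ≤ 2 * ‖θ‖ := by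
  simpa using abs_neuron_sub_le θ 0 hs

theorem intervalIntegrable_neuron (θ : EuclideanSpace ℝ (Fin 3)) :
    IntervalIntegrable (fun s => max (θ 0 * s + θ 1) 0) volume 0 1 :=
  (by fun_prop : Continuous fun s => max (θ 0 * s + θ 1) 0).intervalIntegrable 0 1

theorem abs_mfun_sub_le (θ θ' : EuclideanSpace ℝ (Fin 3)) : |mfun θ - mfun θ'| ≤ 2 * ‖θ - θ'‖ := by
  simpa [mfun] using abs_intervalIntegral_sub_le zero_le_one (intervalIntegrable_neuron θ)
    (intervalIntegrable_neuron θ') fun s hs => abs_neuron_sub_le θ θ' hs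

theorem abs_mfun_le : |mfun θ| ≤ 2 * ‖θ‖ := by
  simpa [mfun] using abs_mfun_sub_le θ 0

end Estimates

section Risk

variable {f : ℝ → ℝ} {θ θ' : EuclideanSpace ℝ (Fin 3)} {s R Bf : ℝ}

theorem abs_fbar_le (hBf : ∀ s ∈ Icc (0:ℝ) 1, |f s| ≤ Bf) : |fbar f| ≤ Bf := by
  simpa [fbar] using intervalIntegral.norm_integral_le_of_norm_le_const (a := (0:ℝ)) (b := 1)
    (f := f) fun s hs => hBf s (by rw [uIoc_of_le zero_le_one] at hs; exact Ioc_subset_Icc_self hs)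

theorem abs_residual_sub_le (hθ : ‖θ‖ ≤ R) (hθ' : ‖θ'‖ ≤ R) (hs : s ∈ Icc (0:ℝ) 1) :
    |(θ 2 * (max (θ 0 * s + θ 1) 0 - mfun θ) + fbar f - f s) -
      (θ' 2 * (max (θ' 0 * s + θ' 1) 0 - mfun θ') + fbar f - f s)| ≤ 8 * R * ‖θ - θ'‖ := by
  have h2 : |θ 2 - θ' 2| ≤ ‖θ - θ'‖ := PiLp.norm_apply_le (θ - θ') 2
  have h2' : |θ' 2| ≤ R := (PiLp.norm_apply_le θ' 2).trans hθ'
  have hu : |max (θ 0 * s + θ 1) 0 - mfun θ| ≤ 4 * R :=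
    (abs_sub _ _).trans (by linarith [abs_neuron_le (θ := θ) hs, abs_mfun_le (θ := θ)])
  have hdu : |(max (θ 0 * s + θ 1) 0 - mfun θ) - (max (θ' 0 * s + θ' 1) 0 - mfun θ')|
      ≤ 4 * ‖θ - θ'‖ := by
    rw [sub_sub_sub_comm]
    exact (abs_sub _ _).trans (by linarith [abs_neuron_sub_le θ θ' hs, abs_mfun_sub_le θ θ'])
  rw [show ∀ a b c d : ℝ, a + c - d - (b + c - d) = a - b by intros; ring]
  refine (abs_mul_sub_mul_le _ _ _ _).trans ?_
  nlinarith [mul_le_mul h2 hu (abs_nonneg _) (norm_nonneg _),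
    mul_le_mul h2' hdu (abs_nonneg _) ((abs_nonneg _).trans h2')]

theorem abs_residual_le (hBf : ∀ s ∈ Icc (0:ℝ) 1, |f s| ≤ Bf) (hθ : ‖θ‖ ≤ R)
    (hs : s ∈ Icc (0:ℝ) 1) :
    |θ 2 * (max (θ 0 * s + θ 1) 0 - mfun θ) + fbar f - f s| ≤ 8 * R ^ 2 + 2 * Bf := by
  have hR : 0 ≤ R := (norm_nonneg θ).trans hθ
  have hd := abs_residual_sub_le (f := f) hθ (by simpa using hR) hs (θ' := 0)
  have h0 : |fbar f - f s| ≤ 2 * Bf :=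
    (abs_sub _ _).trans (by linarith [abs_fbar_le hBf, hBf s hs])
  simp only [PiLp.zero_apply, zero_mul, zero_add, sub_zero] at hd
  have hnorm : 8 * R * ‖θ‖ ≤ 8 * R ^ 2 := by nlinarith
  linarith [(abs_sub_abs_le_abs_sub _ _).trans hd]

theorem continuousOn_residual (hf : ContinuousOn f (Icc 0 1)) (θ : EuclideanSpace ℝ (Fin 3)) :
    ContinuousOn (fun s => θ 2 * (max (θ 0 * s + θ 1) 0 - mfun θ) + fbar f - f s) (Icc 0 1) :=
  (Continuous.continuousOn (by fun_prop)).sub hf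

theorem locallyLipschitz_riskL (hf : ContinuousOn f (Icc 0 1)) : LocallyLipschitz (riskL f) := by
  obtain ⟨Bf, hBf⟩ := isCompact_Icc.exists_bound_of_continuousOn hf
  have hint : ∀ θ : EuclideanSpace ℝ (Fin 3), IntervalIntegrable
      (fun s => (θ 2 * (max (θ 0 * s + θ 1) 0 - mfun θ) + fbar f - f s) ^ 2) volume 0 1 :=
    fun θ => ((continuousOn_residual hf θ).pow 2).intervalIntegrable_of_Icc zero_le_one
  intro θ
  set R := ‖θ‖ + 1
  refine ⟨_, Metric.ball 0 R, Metric.isOpen_ball.mem_nhds (by simp [R]),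
    LipschitzOnWith.of_dist_le' (K := 16 * R * (8 * R ^ 2 + 2 * Bf)) fun x hx y hy => ?_⟩
  have hxR : ‖x‖ ≤ R := (mem_ball_zero_iff.1 hx).le
  have hyR : ‖y‖ ≤ R := (mem_ball_zero_iff.1 hy).le
  rw [Real.dist_eq, dist_eq_norm, riskL, riskL]
  refine (abs_intervalIntegral_sub_le (C := 16 * R * (8 * R ^ 2 + 2 * Bf) * ‖x - y‖) zero_le_one
    (hint x) (hint y) fun s hs => ?_).trans_eq (by ring)
  have hsum := (abs_add_le _ _).trans (add_le_add (abs_residual_le hBf hxR hs)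
    (abs_residual_le hBf hyR hs))
  rw [sq_sub_sq, abs_mul]
  calc _ ≤ (2 * (8 * R ^ 2 + 2 * Bf)) * (8 * R * ‖x - y‖) :=
        mul_le_mul (by linarith) (abs_residual_sub_le hxR hyR hs) (abs_nonneg _)
          (by linarith [(abs_nonneg _).trans hsum])
    _ = _ := by ring

end Risk

theorem sq_mul_le_integral_sq_sub {h : ℝ → ℝ} (hh : Continuous h) {c w δ m : ℝ} (hc : 0 ≤ c)
    (hw : 0 ≤ w) (hcw : c + w ≤ 1) (hδ : 0 ≤ δ) (hhm : ∀ s ∈ Ioc c (c + w), δ ≤ |h s - m|) :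
    δ ^ 2 * w ≤ ∫ s in (0:ℝ)..1, (h s - m) ^ 2 := by
  have hcont : Continuous fun s => (h s - m) ^ 2 := by fun_prop
  rw [intervalIntegral.integral_of_le zero_le_one]
  calc δ ^ 2 * w = δ ^ 2 * volume.real (Ioc c (c + w)) := by
        rw [Real.volume_real_Ioc_of_le (by linarith), add_sub_cancel_left]
    _ ≤ ∫ s in Ioc c (c + w), (h s - m) ^ 2 :=
        setIntegral_ge_of_const_le_real measurableSet_Ioc measure_Ioc_lt_top.ne
          (fun s hs => sq_abs (h s - m) ▸ pow_le_pow_left₀ hδ (hhm s hs) 2)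
          hcont.integrableOn_Ioc
    _ ≤ ∫ s in Ioc 0 1, (h s - m) ^ 2 :=
        setIntegral_mono_set hcont.integrableOn_Ioc (.of_forall fun _ => sq_nonneg _)
          (Ioc_subset_Ioc hc hcw).eventuallyLE

theorem mul_cube_le_integral_sq_neuron_sub {a b ε : ℝ} (ha : 0 < a) (hε : 0 < ε)
    (hvol : ε ≤ volume.real {s ∈ Icc (0:ℝ) 1 | 0 < a * s + b}) (m : ℝ) :
    a ^ 2 * ε ^ 3 / 64 ≤ ∫ s in (0:ℝ)..1, (max (a * s + b) 0 - m) ^ 2 := by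
  have hε1 : ε ≤ 1 := hvol.trans <|
    (measureReal_mono (sep_subset _ _) measure_Icc_lt_top.ne).trans_eq
      (by simp [Real.volume_real_Icc])
  have hab : a * ε ≤ a + b := by
    have hsub : {s ∈ Icc (0:ℝ) 1 | 0 < a * s + b} ⊆ Ioc (1 - (a + b) / a) 1 := by
      rintro s ⟨hs, hpos⟩
      refine ⟨?_, hs.2⟩
      rw [sub_lt_comm, lt_div_iff₀ ha]
      linarith
    have hmax := hvol.trans (measureReal_mono hsub measure_Ioc_lt_top.ne)
    rw [Real.volume_real_Ioc, sub_sub_cancel] at hmax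
    have : ε ≤ (a + b) / a := (le_max_iff.1 hmax).resolve_right hε.not_ge
    rwa [le_div_iff₀ ha, mul_comm] at this
  -- The ramp is `≤ α` on the first quarter of `[1 - ε, 1]` and `≥ α + a ε / 2` on the last one,
  -- so on one of these two quarters it stays `a ε / 4` away from `m`.
  set α := max (a * (1 - 3 * ε / 4) + b) 0
  have hlow : ∀ s ∈ Ioc (1 - ε) (1 - ε + ε / 4), max (a * s + b) 0 ≤ α := fun s hs =>
    max_le_max (by nlinarith [hs.2]) le_rfl
  have hhigh : ∀ s ∈ Ioc (1 - ε / 4) (1 - ε / 4 + ε / 4),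
      α + a * ε / 2 ≤ max (a * s + b) 0 := fun s hs =>
    (add_le_of_le_sub_right (max_le (by nlinarith [hs.1]) (by nlinarith [hs.1]))).trans
      (le_max_left _ _)
  have hcont : Continuous fun s => max (a * s + b) 0 := by fun_prop
  have hδ : 0 ≤ a * ε / 4 := by positivity
  calc a ^ 2 * ε ^ 3 / 64 = (a * ε / 4) ^ 2 * (ε / 4) := by ring
    _ ≤ _ := by
      rcases le_or_gt m (α + a * ε / 4) with hm | hm
      · refine sq_mul_le_integral_sq_sub hcont (c := 1 - ε / 4) (by linarith) (by positivity)
          (by linarith) hδ fun s hs => (le_abs_self _).trans' ?_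
        linarith [hhigh s hs]
      · refine sq_mul_le_integral_sq_sub hcont (c := 1 - ε) (by linarith) (by positivity)
          (by linarith) hδ fun s hs => (neg_le_abs _).trans' ?_
        linarith [hlow s hs]

theorem volume_real_sep_reflect (a b : ℝ) :
    volume.real {s ∈ Icc (0:ℝ) 1 | 0 < -a * s + (a + b)} =
      volume.real {s ∈ Icc (0:ℝ) 1 | 0 < a * s + b} := by
  have hpre : {s ∈ Icc (0:ℝ) 1 | 0 < -a * s + (a + b)} =
      (fun s => 1 - s) ⁻¹' {s ∈ Icc (0:ℝ) 1 | 0 < a * s + b} := by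
    ext s
    simp only [mem_preimage, mem_Icc]
    constructor <;> rintro ⟨⟨h0, h1⟩, hpos⟩ <;> refine ⟨⟨by linarith, by linarith⟩, by linarith⟩
  have hmeas : MeasurableSet {s ∈ Icc (0:ℝ) 1 | 0 < a * s + b} :=
    measurableSet_Icc.inter <|
      measurableSet_lt measurable_const (by fun_prop : Measurable fun s : ℝ => a * s + b)
  rw [hpre, measureReal_def, measureReal_def,
    (Measure.measurePreserving_sub_left volume 1).measure_preimage hmeas.nullMeasurableSet]

theorem integral_sq_neuron_sub_reflect (a b m : ℝ) :
    ∫ s in (0:ℝ)..1, (max (-a * s + (a + b)) 0 - m) ^ 2 =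
      ∫ s in (0:ℝ)..1, (max (a * s + b) 0 - m) ^ 2 := by
  have h := intervalIntegral.integral_comp_sub_left (a := 0) (b := 1)
    (fun s => (max (a * s + b) 0 - m) ^ 2) 1
  rw [sub_zero, sub_self] at h
  rw [← h]
  congr 1
  ext s
  ring_nf

theorem abs_le_abs_of_volume_real_mem_Ioo {a b : ℝ}
    (h : volume.real {s ∈ Icc (0:ℝ) 1 | 0 < a * s + b} ∈ Ioo 0 1) : |b| ≤ |a| := by
  by_contra! hab
  have hsep : {s ∈ Icc (0:ℝ) 1 | 0 < a * s + b} = {s ∈ Icc (0:ℝ) 1 | 0 < b} := by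
    refine Set.ext fun s => and_congr_right fun hs => ?_
    have has : |a * s| < |b| := by
      rw [abs_mul]
      exact (mul_le_of_le_one_right (abs_nonneg a)
        (abs_le.2 ⟨by linarith [hs.1], hs.2⟩)).trans_lt hab
    rcases le_or_gt b 0 with hb | hb
    · rw [abs_of_nonpos hb] at has
      constructor <;> intro <;> linarith [le_abs_self (a * s)]
    · rw [abs_of_pos hb] at has
      constructor <;> intro <;> linarith [neg_abs_le (a * s)]
  rw [hsep] at h
  by_cases hb : 0 < b <;>
    simp only [hb, and_true, and_false, ofPred_mem_eq, ofPred_false, Real.volume_real_Icc,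
      measureReal_empty] at h <;> norm_num at h

theorem cube_div_le_integral_sq_neuron_sub {θ : EuclideanSpace ℝ (Fin 3)} {ε : ℝ}
    (hg : gfun θ = 1) (hε : 0 < ε) (hvol : volume.real (Iact θ) ∈ Ico ε 1) (m : ℝ) :
    ε ^ 3 / 128 ≤ ∫ s in (0:ℝ)..1, (max (θ 0 * s + θ 1) 0 - m) ^ 2 := by
  have hb : |θ 1| ≤ |θ 0| := abs_le_abs_of_volume_real_mem_Ioo ⟨hε.trans_le hvol.1, hvol.2⟩
  have ha : 1 / 2 ≤ θ 0 ^ 2 := by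
    have := sq_le_sq.2 hb
    rw [gfun] at hg
    linarith
  have key : θ 0 ^ 2 * ε ^ 3 / 64 ≤ ∫ s in (0:ℝ)..1, (max (θ 0 * s + θ 1) 0 - m) ^ 2 := by
    rcases (show θ 0 ≠ 0 by rintro h; norm_num [h] at ha).lt_or_gt with hneg | hpos
    · rw [← integral_sq_neuron_sub_reflect]
      simpa using mul_cube_le_integral_sq_neuron_sub (neg_pos.2 hneg) hε
        ((volume_real_sep_reflect _ _).symm ▸ hvol.1) m
    · exact mul_cube_le_integral_sq_neuron_sub hpos hε hvol.1 m
  nlinarith [pow_pos hε 3]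

section Model

variable {f : ℝ → ℝ} {θ : EuclideanSpace ℝ (Fin 3)}

theorem riskL_ge (hf : ContinuousOn f (Icc 0 1)) (θ : EuclideanSpace ℝ (Fin 3)) :
    θ 2 ^ 2 * (∫ s in (0:ℝ)..1, (max (θ 0 * s + θ 1) 0 - mfun θ) ^ 2) / 2
      - ∫ s in (0:ℝ)..1, (fbar f - f s) ^ 2 ≤ riskL f θ := by
  have hσ : IntervalIntegrable (fun s => θ 2 ^ 2 * (max (θ 0 * s + θ 1) 0 - mfun θ) ^ 2 / 2)
      volume 0 1 := (by fun_prop : Continuous _).intervalIntegrable 0 1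
  have hf' : IntervalIntegrable (fun s => (fbar f - f s) ^ 2) volume 0 1 :=
    ((continuousOn_const.sub hf).pow 2).intervalIntegrable_of_Icc zero_le_one
  rw [← intervalIntegral.integral_const_mul, ← intervalIntegral.integral_div,
    ← intervalIntegral.integral_sub hσ hf']
  refine intervalIntegral.integral_mono_on zero_le_one (hσ.sub hf')
    (((continuousOn_residual hf θ).pow 2).intervalIntegrable_of_Icc zero_le_one) fun s _ => ?_
  nlinarith [sq_nonneg (θ 2 * (max (θ 0 * s + θ 1) 0 - mfun θ) + 2 * (fbar f - f s))]

theorem norm_sq_eq_gfun_add (θ : EuclideanSpace ℝ (Fin 3)) : ‖θ‖ ^ 2 = gfun θ + θ 2 ^ 2 := by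
  simp [EuclideanSpace.norm_sq_eq, Fin.sum_univ_three, gfun]

theorem norm_sq_le_of_volume_real_mem_Ico (hf : ContinuousOn f (Icc 0 1)) (hg : gfun θ = 1)
    {ε : ℝ} (hε : 0 < ε) (hvol : volume.real (Iact θ) ∈ Ico ε 1) :
    ‖θ‖ ^ 2 ≤ 1 + 256 * (riskL f θ + ∫ s in (0:ℝ)..1, (fbar f - f s) ^ 2) / ε ^ 3 := by
  have hV := cube_div_le_integral_sq_neuron_sub hg hε hvol (mfun θ)
  have hL := riskL_ge hf θ
  rw [norm_sq_eq_gfun_add, hg, add_le_add_iff_left, le_div_iff₀ (by positivity)]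
  nlinarith [mul_le_mul_of_nonneg_left hV (sq_nonneg (θ 2))]

theorem abs_add_abs_pos_of_gfun_eq_one (hg : gfun θ = 1) : 0 < |θ 0| + |θ 1| := by
  by_contra! h
  have h0 : θ 0 = 0 := abs_eq_zero.1 (le_antisymm (by linarith [abs_nonneg (θ 1)]) (abs_nonneg _))
  have h1 : θ 1 = 0 := abs_eq_zero.1 (le_antisymm (by linarith [abs_nonneg (θ 0)]) (abs_nonneg _))
  norm_num [gfun, h0, h1] at hg

end Model

section ProjectedFlow

variable {G : EuclideanSpace ℝ (Fin 3) → EuclideanSpace ℝ (Fin 3)}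
  {Θ : ℝ → EuclideanSpace ℝ (Fin 3)}

theorem gfun_flow_eq_one {L : EuclideanSpace ℝ (Fin 3) → ℝ}
    (hGloc : ∀ θ : EuclideanSpace ℝ (Fin 3), ∃ r > (0:ℝ), ∃ C : ℝ,
      ∀ x ∈ Metric.ball θ r, ‖G x‖ ≤ C)
    (hG : ∀ θ : EuclideanSpace ℝ (Fin 3), 0 < |θ 0| + |θ 1| →
      G θ = orthComponent (gradient gfun θ) (gradient L θ))
    (hΘ0 : gfun (Θ 0) = 1)
    (hint : ∀ t : ℝ, 0 ≤ t → IntervalIntegrable (fun u => G (Θ u)) volume 0 t)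
    (hΘ : ∀ t : ℝ, 0 ≤ t → Θ t = Θ 0 - ∫ u in (0:ℝ)..t, G (Θ u)) {t : ℝ} (ht : 0 ≤ t) :
    gfun (Θ t) = 1 := by
  have hdiff : Differentiable ℝ gfun := by unfold gfun; fun_prop
  have hlip : LocallyLipschitz gfun :=
    (by unfold gfun; fun_prop : ContDiff ℝ 1 gfun).locallyLipschitz
  have htangent : ∀ θ, fderiv ℝ gfun θ (G θ) = 0 := by
    intro θ
    rcases (add_nonneg (abs_nonneg (θ 0)) (abs_nonneg (θ 1))).lt_or_eq with hpos | hzero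
    · rw [← inner_gradient_left, hG θ hpos, inner_orthComponent_eq_zero]
    -- off the domain of `hG`, `θ` minimizes `gfun`, so the derivative vanishes in every direction
    have h0 : θ 0 = 0 := abs_eq_zero.1 (by linarith [abs_nonneg (θ 0), abs_nonneg (θ 1)])
    have h1 : θ 1 = 0 := abs_eq_zero.1 (by linarith [abs_nonneg (θ 0), abs_nonneg (θ 1)])
    have hmin : IsLocalMin gfun θ := .of_forall fun y => by
      simp only [gfun, h0, h1]
      nlinarith [sq_nonneg (y 0), sq_nonneg (y 1)]
    rw [hmin.fderiv_eq_zero, zero_apply]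
  have hle := comp_flow_le_of_fderiv_nonneg hGloc hint hΘ hlip
    (fun u _ => ⟨_, (hdiff _).hasFDerivAt, (htangent _).ge⟩) ht
  have hge := comp_flow_le_of_fderiv_nonneg hGloc hint hΘ hlip.neg
    (fun u _ => ⟨_, (hdiff _).hasFDerivAt.neg, by simp [htangent]⟩) ht
  simp only [Pi.neg_apply, neg_le_neg_iff] at hge
  linarith

theorem riskL_flow_le {f : ℝ → ℝ} (hf : ContinuousOn f (Icc 0 1))
    (hdiff : ∀ θ : EuclideanSpace ℝ (Fin 3), 0 < |θ 0| + |θ 1| → DifferentiableAt ℝ (riskL f) θ)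
    (hGloc : ∀ θ : EuclideanSpace ℝ (Fin 3), ∃ r > (0:ℝ), ∃ C : ℝ,
      ∀ x ∈ Metric.ball θ r, ‖G x‖ ≤ C)
    (hG : ∀ θ : EuclideanSpace ℝ (Fin 3), 0 < |θ 0| + |θ 1| →
      G θ = orthComponent (gradient gfun θ) (gradient (riskL f) θ))
    (hΘ0 : gfun (Θ 0) = 1)
    (hint : ∀ t : ℝ, 0 ≤ t → IntervalIntegrable (fun u => G (Θ u)) volume 0 t)
    (hΘ : ∀ t : ℝ, 0 ≤ t → Θ t = Θ 0 - ∫ u in (0:ℝ)..t, G (Θ u)) {t : ℝ} (ht : 0 ≤ t) :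
    riskL f (Θ t) ≤ riskL f (Θ 0) := by
  refine comp_flow_le_of_fderiv_nonneg hGloc hint hΘ (locallyLipschitz_riskL hf) (fun u hu => ?_) ht
  have hpos := abs_add_abs_pos_of_gfun_eq_one (gfun_flow_eq_one hGloc hG hΘ0 hint hΘ hu)
  refine ⟨_, (hdiff _ hpos).hasFDerivAt, ?_⟩
  rw [← inner_gradient_left, hG _ hpos, inner_orthComponent_eq_norm_sq]
  positivity

end ProjectedFlow

theorem stmt8_general
    (f : ℝ → ℝ) (hf : ContinuousOn f (Set.Icc 0 1))
    (h𝓛diff : ∀ θ : EuclideanSpace ℝ (Fin 3), 0 < |θ 0| + |θ 1| →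
      DifferentiableAt ℝ (riskL f) θ)
    (𝔊 : EuclideanSpace ℝ (Fin 3) → EuclideanSpace ℝ (Fin 3))
    (h𝔊loc : ∀ θ : EuclideanSpace ℝ (Fin 3),
      ∃ r > (0:ℝ), ∃ C : ℝ, ∀ x ∈ Metric.ball θ r, ‖𝔊 x‖ ≤ C)
    (h𝔊 : ∀ θ : EuclideanSpace ℝ (Fin 3), 0 < |θ 0| + |θ 1| →
      𝔊 θ = gradient (riskL f) θ -
        ((‖gradient gfun θ‖ ^ 2)⁻¹ * ⟪gradient (riskL f) θ, gradient gfun θ⟫) •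
          gradient gfun θ)
    (Θ : ℝ → EuclideanSpace ℝ (Fin 3))
    (hΘ0 : gfun (Θ 0) = 1)
    (hΘint : ∀ t : ℝ, 0 ≤ t → IntervalIntegrable (fun u => 𝔊 (Θ u)) volume 0 t)
    (hΘ : ∀ t : ℝ, 0 ≤ t → Θ t = Θ 0 - ∫ u in (0:ℝ)..t, 𝔊 (Θ u)) :
    ∀ ε : ℝ, 0 < ε → ∃ C : ℝ, ∀ t : ℝ, 0 ≤ t →
      (volume (Iact (Θ t))).toReal ∈ Set.Ico ε 1 → ‖Θ t‖ ≤ C := by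
  intro ε hε
  refine ⟨√(1 + 256 * (riskL f (Θ 0) + ∫ s in (0:ℝ)..1, (fbar f - f s) ^ 2) / ε ^ 3),
    fun t ht hvol => (le_abs_self _).trans (Real.abs_le_sqrt ?_)⟩
  have hg := gfun_flow_eq_one h𝔊loc h𝔊 hΘ0 hΘint hΘ ht
  have hL := riskL_flow_le hf h𝓛diff h𝔊loc h𝔊 hΘ0 hΘint hΘ ht
  refine (norm_sq_le_of_volume_real_mem_Ico hf hg hε hvol).trans ?_
  gcongr

/-- Lemma 3.4: the gradient flow trajectory is bounded on the set of times `t` at which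
the Lebesgue measure of the activity interval `I^{Θ(t)}` lies in `[ε, 1)`. -/
theorem stmt8
    (f : ℝ → ℝ) (hf : ContinuousOn f (Set.Icc 0 1))
    (h𝓛diff : ∀ θ : EuclideanSpace ℝ (Fin 3), 0 < |θ 0| + |θ 1| →
      DifferentiableAt ℝ (riskL f) θ)
    (𝔊 : EuclideanSpace ℝ (Fin 3) → EuclideanSpace ℝ (Fin 3))
    (h𝔊meas : Measurable 𝔊)
    (h𝔊loc : ∀ θ : EuclideanSpace ℝ (Fin 3),
      ∃ r > (0:ℝ), ∃ C : ℝ, ∀ x ∈ Metric.ball θ r, ‖𝔊 x‖ ≤ C)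
    (h𝔊 : ∀ θ : EuclideanSpace ℝ (Fin 3), 0 < |θ 0| + |θ 1| →
      𝔊 θ = gradient (riskL f) θ -
        ((‖gradient gfun θ‖ ^ 2)⁻¹ * ⟪gradient (riskL f) θ, gradient gfun θ⟫) •
          gradient gfun θ)
    (Θ : ℝ → EuclideanSpace ℝ (Fin 3))
    (hΘ0 : gfun (Θ 0) = 1)
    (hΘint : ∀ t : ℝ, 0 ≤ t → IntervalIntegrable (fun u => 𝔊 (Θ u)) volume 0 t)
    (hΘ : ∀ t : ℝ, 0 ≤ t → Θ t = Θ 0 - ∫ u in (0:ℝ)..t, 𝔊 (Θ u)) :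
    ∀ ε : ℝ, 0 < ε → ∃ C : ℝ, ∀ t : ℝ, 0 ≤ t →
      (volume (Iact (Θ t))).toReal ∈ Set.Ico ε 1 → ‖Θ t‖ ≤ C :=
  stmt8_general f hf h𝓛diff 𝔊 h𝔊loc h𝔊 Θ hΘ0 hΘint hΘ
end

section
/- Let α, β ∈ ℝ and let I ⊆ ℝ be a bounded interval. Then ∫_I (αx + β)² dx ≥ (α²/12) (μ(I))³, where μ denotes Lebesgue measure on ℝ. -/
/-!
Writing `(α x + β)² = α² (x - c)²`, the bathtub principle says that among sets of given measure `m`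
the integral of `(x - c)²` is least on the interval of length `m` centred at `c`, where it equals
`m³ / 12`.
-/

open MeasureTheory Set

/-- The bathtub principle. -/
theorem setIntegral_le_setIntegral_of_sublevelSet {X : Type*} [MeasurableSpace X]
    {μ : Measure X} {f : X → ℝ} {s t : Set X} {r : ℝ} (ht : MeasurableSet t)
    (hf_le : ∀ x ∈ t, f x ≤ r) (hf_ge : ∀ x ∉ t, r ≤ f x) (hμ : μ t = μ s) (hs : μ s ≠ ⊤)
    (hfs : IntegrableOn f s μ) (hft : IntegrableOn f t μ) :
    ∫ x in t, f x ∂μ ≤ ∫ x in s, f x ∂μ := by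
  have hr_s : IntegrableOn (fun _ => r) s μ := integrableOn_const hs
  have hr_t : IntegrableOn (fun _ => r) t μ := integrableOn_const (hμ ▸ hs)
  have key : ∫ x in t, (f x - r) ∂μ ≤ ∫ x in s, (f x - r) ∂μ :=
    calc ∫ x in t, (f x - r) ∂μ
        ≤ ∫ x in s ∩ t, (f x - r) ∂μ := by
          have := setIntegral_mono_set (s := s ∩ t) (f := fun x => r - f x) (hr_t.sub hft)
            (ae_restrict_of_forall_mem ht fun x hx => sub_nonneg.2 (hf_le x hx))
            inter_subset_right.eventuallyLE
          simpa only [← neg_sub (f _) r, integral_neg, neg_le_neg_iff] using this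
      _ = ∫ x in s, t.indicator (fun x => f x - r) x ∂μ := (setIntegral_indicator ht).symm
      _ ≤ ∫ x in s, (f x - r) ∂μ := by
          refine integral_mono ((hfs.sub hr_s).indicator ht) (hfs.sub hr_s) fun x => ?_
          by_cases hx : x ∈ t
          · simp [hx]
          · simp [hx, hf_ge x hx]
  have hμreal : μ.real t = μ.real s := by simp [measureReal_def, hμ]
  rwa [integral_sub hft hr_t, integral_sub hfs hr_s, setIntegral_const, setIntegral_const, hμreal,
    sub_le_sub_iff_right] at key

theorem integral_Icc_sub_sq (c r : ℝ) (hr : 0 ≤ r) :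
    ∫ x in Icc (c - r) (c + r), (x - c) ^ 2 = 2 * r ^ 3 / 3 := by
  rw [integral_Icc_eq_integral_Ioc, ← intervalIntegral.integral_of_le (by linarith),
    intervalIntegral.integral_comp_sub_right (fun x => x ^ 2), integral_pow]
  ring

theorem measureReal_cube_div_twelve_le_setIntegral_sub_sq {S : Set ℝ}
    (hS : Bornology.IsBounded S) (c : ℝ) :
    volume.real S ^ 3 / 12 ≤ ∫ x in S, (x - c) ^ 2 := by
  set m := volume.real S
  have hm : 0 ≤ m := measureReal_nonneg
  have hSfin : volume S ≠ ⊤ := hS.measure_lt_top.ne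
  have hcont : Continuous fun x : ℝ => (x - c) ^ 2 := by fun_prop
  have hJ : volume (Icc (c - m / 2) (c + m / 2)) = volume S := by
    rw [Real.volume_Icc, show c + m / 2 - (c - m / 2) = m by ring, ← ENNReal.ofReal_toReal hSfin]
    rfl
  calc m ^ 3 / 12 = ∫ x in Icc (c - m / 2) (c + m / 2), (x - c) ^ 2 := by
        rw [integral_Icc_sub_sq c _ (by positivity)]; ring
    _ ≤ ∫ x in S, (x - c) ^ 2 := by
        refine setIntegral_le_setIntegral_of_sublevelSet (r := (m / 2) ^ 2) measurableSet_Icc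
          (fun x hx => ?_) (fun x hx => ?_) hJ hSfin
          ((hcont.locallyIntegrable.integrableOn_isCompact hS.isCompact_closure).mono_set
            subset_closure)
          (hcont.integrableOn_Icc)
        · exact sq_le_sq' (by linarith [hx.1]) (by linarith [hx.2])
        · rw [mem_Icc, not_and_or, not_le, not_le] at hx
          rcases hx with hx | hx
          · nlinarith
          · nlinarith

theorem stmt9_general (α β : ℝ) (I : Set ℝ)
    (hIbdd : Bornology.IsBounded I) :
    α ^ 2 / 12 * (volume I).toReal ^ 3 ≤ ∫ x in I, (α * x + β) ^ 2 := by
  rcases eq_or_ne α 0 with rfl | hα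
  · rw [zero_pow two_ne_zero, zero_div, zero_mul]
    exact integral_nonneg fun _ => sq_nonneg _
  have hsq : ∀ x, (α * x + β) ^ 2 = α ^ 2 * (x - -β / α) ^ 2 := fun x => by
    field_simp
    ring
  calc α ^ 2 / 12 * (volume I).toReal ^ 3 = α ^ 2 * (volume.real I ^ 3 / 12) := by
        rw [measureReal_def]; ring
    _ ≤ α ^ 2 * ∫ x in I, (x - -β / α) ^ 2 := by
        gcongr
        exact measureReal_cube_div_twelve_le_setIntegral_sub_sq hIbdd _
    _ = ∫ x in I, (α * x + β) ^ 2 := by simp_rw [hsq, integral_const_mul]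

/-- Lemma 3.5: for real `α, β` and a bounded interval `I ⊆ ℝ` one has
`∫_I (αx + β)² dx ≥ (α²/12) (μ(I))³`. -/
theorem stmt9 (α β : ℝ) (I : Set ℝ)
    (hIbdd : Bornology.IsBounded I) (hIint : I.OrdConnected) :
    α ^ 2 / 12 * (volume I).toReal ^ 3 ≤ ∫ x in I, (α * x + β) ^ 2 :=
  stmt9_general α β I hIbdd
end
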